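/- arXiv:math/0410441 — 8 statements merged into one kernel-verified Lean document; each statement's English description precedes it below -/
import Mathlib

section
/- Let a > 0 and λ ≥ 0, and define f : [0,∞) → ℝ by f(r) = (1/2)·∫₀^r exp((a s⁴ − 2λ s²)/8)·(∫_s^∞ exp(−(a σ⁴ − 2λ σ²)/8) dσ) ds. Then f is twice continuously differentiable on [0,∞), f(0) = 0, its derivative is f'(r) = (1/2)·exp((a r⁴ − 2λ r²)/8)·∫_r^∞ exp(−(a σ⁴ − 2λ σ²)/8) dσ, and f satisfies the ordinary differential equation 2 f''(r) + f'(r)·(λ r − a r³) = −1 for all r ≥ 0. -/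
/-!
Write `P(σ) = (aσ⁴ − 2λσ²)/8` and `G(r) = ∫_r^∞ e^{−P}`, so that `G' = −e^{−P}`. The fundamental
theorem of calculus gives `f' = ½ e^P G`, and then `2f'' = (e^P G)' = P' e^P G − e^P e^{−P} = 2P'f' − 1`,
which is the equation because `2P'(r) = a r³ − λ r`. The only analytic input is the integrability of
`e^{−P}`, from `−P(σ) ≤ C − σ²` (complete the square in `σ²`, using `a > 0`).
-/

open MeasureTheory Set

theorem hasDerivAt_integral_Ioi {E : Type*} [NormedAddCommGroup E] [NormedSpace ℝ E]
    [CompleteSpace E] {φ : ℝ → E} {a x : ℝ} (hφ : IntegrableOn φ (Ioi a)) (hax : a < x)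
    (hcont : ContinuousAt φ x) :
    HasDerivAt (fun u => ∫ σ in Ioi u, φ σ) (-φ x) x := by
  have hsplit : (fun u => ∫ σ in Ioi u, φ σ) =ᶠ[nhds x]
      fun u => (∫ σ in Ioi a, φ σ) - ∫ σ in a..u, φ σ := by
    filter_upwards [Ioi_mem_nhds hax] with u hu
    rw [eq_sub_iff_add_eq', intervalIntegral.integral_interval_add_Ioi hφ
      (hφ.mono_set (Ioi_subset_Ioi hu.le))]
  have hFTC : HasDerivAt (fun u => ∫ σ in a..u, φ σ) (φ x) x :=
    intervalIntegral.integral_hasDerivAt_right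
      ((intervalIntegrable_iff_integrableOn_Ioc_of_le hax.le).2 (hφ.mono_set Ioc_subset_Ioi_self))
      (AEStronglyMeasurable.stronglyMeasurableAtFilter_of_mem hφ.aestronglyMeasurable
        (Ioi_mem_nhds hax)) hcont
  exact (hFTC.const_sub _).congr_of_eventuallyEq hsplit

theorem contDiff_two_of_hasDerivAt {f f' f'' : ℝ → ℝ} (hf : ∀ x, HasDerivAt f (f' x) x)
    (hf' : ∀ x, HasDerivAt f' (f'' x) x) (hf'' : Continuous f'') : ContDiff ℝ 2 f := by
  have hderiv : deriv f = f' := funext fun x => (hf x).deriv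
  have hderiv' : deriv f' = f'' := funext fun x => (hf' x).deriv
  rw [show (2 : WithTop ℕ∞) = 1 + 1 from rfl, contDiff_succ_iff_deriv, hderiv,
    contDiff_one_iff_deriv, hderiv']
  exact ⟨fun x => (hf x).differentiableAt, by simp, fun x => (hf' x).differentiableAt, hf''⟩

noncomputable def expNegTail (P : ℝ → ℝ) (r : ℝ) : ℝ := ∫ σ in Ioi r, Real.exp (-P σ)

section

variable {P P' : ℝ → ℝ}

theorem hasDerivAt_expNegTail (hP : Continuous P) (hint : Integrable fun σ => Real.exp (-P σ))
    (x : ℝ) : HasDerivAt (expNegTail P) (-Real.exp (-P x)) x :=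
  hasDerivAt_integral_Ioi hint.integrableOn (sub_one_lt x) (by fun_prop)

variable (hP : ∀ x, HasDerivAt P (P' x) x) (hint : Integrable fun σ => Real.exp (-P σ))
include hP hint

theorem hasDerivAt_exp_mul_expNegTail (x : ℝ) :
    HasDerivAt (fun r => Real.exp (P r) * expNegTail P r)
      (P' x * (Real.exp (P x) * expNegTail P x) - 1) x := by
  have hPc : Continuous P := continuous_iff_continuousAt.2 fun x => (hP x).continuousAt
  refine ((hP x).exp.mul (hasDerivAt_expNegTail hPc hint x)).congr_deriv ?_
  rw [mul_neg, ← Real.exp_add, add_neg_cancel, Real.exp_zero]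
  ring

theorem continuous_exp_mul_expNegTail : Continuous fun r => Real.exp (P r) * expNegTail P r :=
  continuous_iff_continuousAt.2 fun r => (hasDerivAt_exp_mul_expNegTail hP hint r).continuousAt

theorem hasDerivAt_integral_exp_mul_expNegTail (x : ℝ) :
    HasDerivAt (fun r => 1 / 2 * ∫ s in (0 : ℝ)..r, Real.exp (P s) * expNegTail P s)
      (1 / 2 * (Real.exp (P x) * expNegTail P x)) x :=
  have hcont := continuous_exp_mul_expNegTail hP hint
  (intervalIntegral.integral_hasDerivAt_right (hcont.intervalIntegrable _ _)
    (hcont.stronglyMeasurableAtFilter _ _) hcont.continuousAt).const_mul _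

theorem two_mul_deriv_deriv_integral_exp_mul_expNegTail (x : ℝ) :
    2 * deriv (deriv fun r => 1 / 2 * ∫ s in (0 : ℝ)..r, Real.exp (P s) * expNegTail P s) x =
      2 * P' x * deriv (fun r => 1 / 2 * ∫ s in (0 : ℝ)..r, Real.exp (P s) * expNegTail P s) x
        - 1 := by
  rw [funext fun r => (hasDerivAt_integral_exp_mul_expNegTail hP hint r).deriv,
    ((hasDerivAt_exp_mul_expNegTail hP hint x).const_mul _).deriv]
  ring

theorem contDiff_two_integral_exp_mul_expNegTail (hP' : Continuous P') :
    ContDiff ℝ 2 fun r => 1 / 2 * ∫ s in (0 : ℝ)..r, Real.exp (P s) * expNegTail P s := by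
  refine contDiff_two_of_hasDerivAt (hasDerivAt_integral_exp_mul_expNegTail hP hint)
    (fun x => (hasDerivAt_exp_mul_expNegTail hP hint x).const_mul (1 / 2)) ?_
  have := continuous_exp_mul_expNegTail hP hint
  fun_prop

end

theorem integrable_exp_neg_quartic {a : ℝ} (lam : ℝ) (ha : 0 < a) :
    Integrable fun σ : ℝ => Real.exp (-((a * σ ^ 4 - 2 * lam * σ ^ 2) / 8)) := by
  refine ((integrable_exp_neg_mul_sq one_pos).const_mul (Real.exp ((lam + 4) ^ 2 / (8 * a)))).mono'
    (by fun_prop) (Filter.Eventually.of_forall fun σ => ?_)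
  rw [Real.norm_of_nonneg (Real.exp_pos _).le, ← Real.exp_add, Real.exp_le_exp]
  have hsq : (lam + 4) ^ 2 / (8 * a) + -1 * σ ^ 2 + (a * σ ^ 4 - 2 * lam * σ ^ 2) / 8
      = (a * σ ^ 2 - (lam + 4)) ^ 2 / (8 * a) := by
    field_simp
    ring
  have : 0 ≤ (a * σ ^ 2 - (lam + 4)) ^ 2 / (8 * a) := by positivity
  linarith

theorem hasDerivAt_quartic (a lam x : ℝ) :
    HasDerivAt (fun s : ℝ => (a * s ^ 4 - 2 * lam * s ^ 2) / 8) ((a * x ^ 3 - lam * x) / 2) x := by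
  refine ((((hasDerivAt_pow 4 x).const_mul a).sub
    ((hasDerivAt_pow 2 x).const_mul (2 * lam))).div_const 8).congr_deriv ?_
  norm_num
  ring

theorem stmt1_general (a lam : ℝ) (ha : 0 < a) (f : ℝ → ℝ)
    (hf : ∀ r : ℝ, f r = (1 / 2) * ∫ s in (0:ℝ)..r,
      Real.exp ((a * s ^ 4 - 2 * lam * s ^ 2) / 8) *
        ∫ σ in Set.Ioi s, Real.exp (-((a * σ ^ 4 - 2 * lam * σ ^ 2) / 8))) :
    ContDiffOn ℝ 2 f (Set.Ici 0) ∧ f 0 = 0 ∧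
    (∀ r : ℝ, 0 ≤ r → deriv f r = (1 / 2) * Real.exp ((a * r ^ 4 - 2 * lam * r ^ 2) / 8) *
      ∫ σ in Set.Ioi r, Real.exp (-((a * σ ^ 4 - 2 * lam * σ ^ 2) / 8))) ∧
    (∀ r : ℝ, 0 ≤ r →
      2 * deriv (deriv f) r + deriv f r * (lam * r - a * r ^ 3) = -1) := by
  set P : ℝ → ℝ := fun s => (a * s ^ 4 - 2 * lam * s ^ 2) / 8
  have hP := hasDerivAt_quartic a lam
  have hint := integrable_exp_neg_quartic lam ha
  obtain rfl : f = fun r => 1 / 2 * ∫ s in (0 : ℝ)..r, Real.exp (P s) * expNegTail P s :=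
    funext hf
  refine ⟨(contDiff_two_integral_exp_mul_expNegTail hP hint (by fun_prop)).contDiffOn, by simp,
    fun r _ => ?_, fun r _ => ?_⟩
  · rw [(hasDerivAt_integral_exp_mul_expNegTail hP hint r).deriv, ← mul_assoc]
    rfl
  · rw [two_mul_deriv_deriv_integral_exp_mul_expNegTail hP hint r]
    ring

/-- For `a > 0`, `λ ≥ 0`, the function
`f r = (1/2) ∫₀^r exp((a s⁴ − 2λ s²)/8) (∫_s^∞ exp(−(a σ⁴ − 2λ σ²)/8) dσ) ds`
is `C²` on `[0,∞)`, vanishes at `0`, has derivative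
`f'(r) = (1/2) exp((a r⁴ − 2λ r²)/8) ∫_r^∞ exp(−(a σ⁴ − 2λ σ²)/8) dσ`,
and satisfies `2 f'' + f'·(λ r − a r³) = −1` on `[0,∞)`. -/
theorem stmt1 (a lam : ℝ) (ha : 0 < a) (hlam : 0 ≤ lam) (f : ℝ → ℝ)
    (hf : ∀ r : ℝ, f r = (1 / 2) * ∫ s in (0:ℝ)..r,
      Real.exp ((a * s ^ 4 - 2 * lam * s ^ 2) / 8) *
        ∫ σ in Set.Ioi s, Real.exp (-((a * σ ^ 4 - 2 * lam * σ ^ 2) / 8))) :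
    ContDiffOn ℝ 2 f (Set.Ici 0) ∧ f 0 = 0 ∧
    (∀ r : ℝ, 0 ≤ r → deriv f r = (1 / 2) * Real.exp ((a * r ^ 4 - 2 * lam * r ^ 2) / 8) *
      ∫ σ in Set.Ioi r, Real.exp (-((a * σ ^ 4 - 2 * lam * σ ^ 2) / 8))) ∧
    (∀ r : ℝ, 0 ≤ r →
      2 * deriv (deriv f) r + deriv f r * (lam * r - a * r ^ 3) = -1) :=
  stmt1_general a lam ha f hf
end

section
/- Let a > 0, λ ≥ 0, and let f : [0,∞) → ℝ be defined by f(r) = (1/2)·∫₀^r exp((a s⁴ − 2λ s²)/8)·(∫_s^∞ exp(−(a σ⁴ − 2λ σ²)/8) dσ) ds. Then (a r³ − λ r)·f'(r) < 1 for every r ≥ 0. -/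
/-!
Write `V σ = (a σ⁴ - 2λ σ²)/8`, so that `a σ³ - λ σ = 2 V' σ` and
`f' r = ½ e^{V r} ∫_r^∞ e^{-V}`. The claim is trivial when `V' r ≤ 0`. Otherwise `V'` exceeds
`V' r` on `(r, ∞)`, hence `V' r ∫_r^∞ e^{-V} < ∫_r^∞ V' e^{-V} = e^{-V r}`, the last integral
being exact because `-e^{-V}` is a primitive of `V' e^{-V}` vanishing at infinity.
-/

open MeasureTheory Set Filter Topology Real

theorem setIntegral_lt_setIntegral_of_forall_lt {X : Type*} [MeasurableSpace X] {μ : Measure X}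
    {s : Set X} {f g : X → ℝ} (hs : MeasurableSet s) (hμs : μ s ≠ 0)
    (hf : IntegrableOn f s μ) (hg : IntegrableOn g s μ) (hlt : ∀ x ∈ s, f x < g x) :
    ∫ x in s, f x ∂μ < ∫ x in s, g x ∂μ := by
  rw [← sub_pos, ← integral_sub hg hf]
  refine (setIntegral_pos_iff_support_of_nonneg_ae (f := fun x => g x - f x) ?_ (hg.sub hf)).2 ?_
  · exact (ae_restrict_iff' hs).2 (Eventually.of_forall fun x hx => (sub_pos.2 (hlt x hx)).le)
  · have hsupp : s ⊆ Function.support fun x => g x - f x := fun x hx => (sub_pos.2 (hlt x hx)).ne'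
    rw [inter_eq_self_of_subset_right hsupp]
    exact pos_iff_ne_zero.2 hμs

theorem continuous_integral_Ioi {E : Type*} [NormedAddCommGroup E] [NormedSpace ℝ E]
    {g : ℝ → E} (hg : Integrable g) : Continuous fun s : ℝ => ∫ σ in Ioi s, g σ := by
  have htail : ∀ s : ℝ,
      ∫ σ in Ioi s, g σ = (∫ σ in Ioi (0 : ℝ), g σ) - ∫ σ in (0 : ℝ)..s, g σ := fun s => by
    rw [← intervalIntegral.integral_Ioi_sub_Ioi' hg.integrableOn hg.integrableOn]
    abel
  exact (continuous_const.sub (hg.continuous_primitive 0)).congr fun s => (htail s).symm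

theorem hasDerivAt_integral_mul_integral_Ioi {h g : ℝ → ℝ} (hh : Continuous h)
    (hg : Integrable g) (r : ℝ) :
    HasDerivAt (fun r => ∫ s in (0 : ℝ)..r, h s * ∫ σ in Ioi s, g σ)
      (h r * ∫ σ in Ioi r, g σ) r :=
  intervalIntegral.integral_hasDerivAt_right
    ((hh.mul (continuous_integral_Ioi hg)).intervalIntegrable _ _)
    (hh.mul (continuous_integral_Ioi hg)).aestronglyMeasurable.stronglyMeasurableAtFilter
    (hh.mul (continuous_integral_Ioi hg)).continuousAt

theorem mul_integral_Ioi_exp_neg_lt_exp_neg {V v : ℝ → ℝ} {r : ℝ}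
    (hV : ∀ σ ∈ Ici r, HasDerivAt V (v σ) σ) (hV_top : Tendsto V atTop atTop)
    (hint : IntegrableOn (fun σ => exp (-V σ)) (Ioi r))
    (hvr : 0 < v r) (hv : ∀ σ ∈ Ioi r, v r < v σ) :
    v r * ∫ σ in Ioi r, exp (-V σ) < exp (-V r) := by
  have hprim : ∀ σ ∈ Ici r, HasDerivAt (fun t => -exp (-V t)) (v σ * exp (-V σ)) σ :=
    fun σ hσ => ((hV σ hσ).neg.exp.neg).congr_deriv (by simp [mul_comm])
  have hnonneg : ∀ σ ∈ Ioi r, 0 ≤ v σ * exp (-V σ) :=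
    fun σ hσ => mul_nonneg (hvr.trans (hv σ hσ)).le (exp_pos _).le
  have hlim : Tendsto (fun t => -exp (-V t)) atTop (𝓝 0) := by
    simpa using (tendsto_exp_atBot.comp (tendsto_neg_atTop_atBot.comp hV_top)).neg
  have hval : ∫ σ in Ioi r, v σ * exp (-V σ) = exp (-V r) := by
    simpa using integral_Ioi_of_hasDerivAt_of_nonneg' hprim hnonneg hlim
  rw [← hval, ← integral_const_mul]
  exact setIntegral_lt_setIntegral_of_forall_lt measurableSet_Ioi (by simp) (hint.const_mul _)
    (integrableOn_Ioi_deriv_of_nonneg' hprim hnonneg hlim)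
    fun σ hσ => mul_lt_mul_of_pos_right (hv σ hσ) (exp_pos _)

noncomputable def quarticPotential (a lam σ : ℝ) : ℝ := (a * σ ^ 4 - 2 * lam * σ ^ 2) / 8

theorem hasDerivAt_quarticPotential (a lam σ : ℝ) :
    HasDerivAt (quarticPotential a lam) ((a * σ ^ 3 - lam * σ) / 2) σ := by
  have h := (((hasDerivAt_pow 4 σ).const_mul a).sub
    ((hasDerivAt_pow 2 σ).const_mul (2 * lam))).div_const 8
  exact h.congr_deriv (by ring)

theorem continuous_quarticPotential (a lam : ℝ) : Continuous (quarticPotential a lam) :=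
  continuous_iff_continuousAt.2 fun σ => (hasDerivAt_quarticPotential a lam σ).continuousAt

/-- Completing the square in `σ²`. -/
theorem quadratic_le_quarticPotential {a : ℝ} (lam : ℝ) (ha : 0 < a) (σ : ℝ) :
    a / 16 * σ ^ 2 - (lam ^ 2 / (4 * a) + a / 16) ≤ quarticPotential a lam σ := by
  have h : lam * σ ^ 2 / 4 - a * σ ^ 4 / 16 ≤ lam ^ 2 / (4 * a) := by
    rw [le_div_iff₀ (by positivity)]
    nlinarith [sq_nonneg (a * σ ^ 2 - 2 * lam)]
  unfold quarticPotential
  nlinarith [sq_nonneg (σ ^ 2 - 1)]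

theorem tendsto_quarticPotential_atTop {a : ℝ} (lam : ℝ) (ha : 0 < a) :
    Tendsto (quarticPotential a lam) atTop atTop :=
  tendsto_atTop_mono (quadratic_le_quarticPotential lam ha) <| tendsto_atTop_add_const_right _ _ <|
    (tendsto_pow_atTop two_ne_zero).const_mul_atTop (by positivity)

theorem integrable_exp_neg_quarticPotential {a : ℝ} (lam : ℝ) (ha : 0 < a) :
    Integrable fun σ => exp (-quarticPotential a lam σ) := by
  refine ((integrable_exp_neg_mul_sq (show 0 < a / 16 by positivity)).const_mul
    (exp (lam ^ 2 / (4 * a) + a / 16))).mono'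
    (continuous_quarticPotential a lam).neg.rexp.aestronglyMeasurable
    (Eventually.of_forall fun σ => ?_)
  rw [norm_eq_abs, abs_exp, ← exp_add, exp_le_exp]
  linarith [quadratic_le_quarticPotential lam ha σ]

theorem cubic_lt_cubic_of_pos {a lam r σ : ℝ} (ha : 0 < a) (hr : 0 ≤ r)
    (hpos : 0 < a * r ^ 3 - lam * r) (hrσ : r < σ) : a * r ^ 3 - lam * r < a * σ ^ 3 - lam * σ := by
  have hq : lam < a * r ^ 2 := by
    by_contra! h
    nlinarith [mul_nonneg hr (sub_nonneg.2 h)]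
  have hfac : 0 < a * (σ ^ 2 + σ * r + r ^ 2) - lam := by
    have hσ : 0 < σ := hr.trans_lt hrσ
    nlinarith [mul_pos ha (mul_pos hσ hσ), mul_nonneg ha.le (mul_nonneg hσ.le hr)]
  nlinarith [mul_pos (sub_pos.2 hrσ) hfac]

theorem stmt2_general (a lam : ℝ) (ha : 0 < a) (f : ℝ → ℝ)
    (hf : ∀ r : ℝ, f r = (1 / 2) * ∫ s in (0:ℝ)..r,
      Real.exp ((a * s ^ 4 - 2 * lam * s ^ 2) / 8) *
        ∫ σ in Set.Ioi s, Real.exp (-((a * σ ^ 4 - 2 * lam * σ ^ 2) / 8))) :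
    ∀ r : ℝ, 0 ≤ r → (a * r ^ 3 - lam * r) * deriv f r < 1 := by
  intro r hr
  set V := quarticPotential a lam
  set I := ∫ σ in Ioi r, exp (-V σ)
  have hint := integrable_exp_neg_quarticPotential lam ha
  have hderiv : deriv f r = 1 / 2 * (exp (V r) * I) := by
    rw [show f = _ from funext hf]
    exact ((hasDerivAt_integral_mul_integral_Ioi (continuous_quarticPotential a lam).rexp hint
      r).const_mul _).deriv
  rw [hderiv]
  rcases le_or_gt (a * r ^ 3 - lam * r) 0 with hc | hc
  · have hI : 0 ≤ I := setIntegral_nonneg measurableSet_Ioi fun _ _ => (exp_pos _).le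
    exact (mul_nonpos_of_nonpos_of_nonneg hc (by positivity)).trans_lt one_pos
  · have key : (a * r ^ 3 - lam * r) / 2 * I < exp (-V r) :=
      mul_integral_Ioi_exp_neg_lt_exp_neg (fun σ _ => hasDerivAt_quarticPotential a lam σ)
        (tendsto_quarticPotential_atTop lam ha) hint.integrableOn (half_pos hc)
        fun σ hσ => div_lt_div_of_pos_right (cubic_lt_cubic_of_pos ha hr hc hσ) two_pos
    calc (a * r ^ 3 - lam * r) * (1 / 2 * (exp (V r) * I))
        = (a * r ^ 3 - lam * r) / 2 * I * exp (V r) := by ring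
      _ < exp (-V r) * exp (V r) := mul_lt_mul_of_pos_right key (exp_pos _)
      _ = 1 := by rw [← exp_add, neg_add_cancel, exp_zero]

/-- For `a > 0`, `λ ≥ 0`, and
`f r = (1/2) ∫₀^r exp((a s⁴ − 2λ s²)/8) (∫_s^∞ exp(−(a σ⁴ − 2λ σ²)/8) dσ) ds`,
one has `(a r³ − λ r) f'(r) < 1` for every `r ≥ 0`. -/
theorem stmt2 (a lam : ℝ) (ha : 0 < a) (hlam : 0 ≤ lam) (f : ℝ → ℝ)
    (hf : ∀ r : ℝ, f r = (1 / 2) * ∫ s in (0:ℝ)..r,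
      Real.exp ((a * s ^ 4 - 2 * lam * s ^ 2) / 8) *
        ∫ σ in Set.Ioi s, Real.exp (-((a * σ ^ 4 - 2 * lam * σ ^ 2) / 8))) :
    ∀ r : ℝ, 0 ≤ r → (a * r ^ 3 - lam * r) * deriv f r < 1 :=
  stmt2_general a lam ha f hf
end

section
/- Let a > 0, λ ≥ 0, and let f : [0,∞) → ℝ be defined by f(r) = (1/2)·∫₀^r exp((a s⁴ − 2λ s²)/8)·(∫_s^∞ exp(−(a σ⁴ − 2λ σ²)/8) dσ) ds. Then there exists a constant Λ > 0 (depending only on a and λ) such that f'(r) ≤ Λ and f(r) ≤ Λ for all r ≥ 0; in particular the increasing function f is bounded on [0,∞). -/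
open MeasureTheory

section Aux

open Set Real

/-- pointwise bound: `exp (-F σ) ≤ C * exp (-σ)` -/
lemma stmt4_aux_ptbound (a lam : ℝ) (ha : 0 < a) (hlam : 0 ≤ lam) (σ : ℝ) :
    Real.exp (-((a * σ ^ 4 - 2 * lam * σ ^ 2) / 8)) ≤
      Real.exp (lam ^ 2 / (2 * a) + (1 + 16 / a)) * Real.exp (-σ) := by
  rw [← Real.exp_add]
  apply Real.exp_le_exp.2
  have h1 : 2 * lam * σ ^ 2 / 8 ≤ a * σ ^ 4 / 16 + lam ^ 2 / (2 * a) := by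
    rw [div_add_div _ _ (by norm_num : (16:ℝ) ≠ 0) (by positivity : 2 * a ≠ 0),
      div_le_div_iff₀ (by norm_num) (by positivity)]
    nlinarith [sq_nonneg (a * σ ^ 2 - 4 * lam), mul_pos ha ha, sq_nonneg σ, sq_nonneg (σ^2)]
  have h2 : -(a * σ ^ 4 / 16) ≤ (1 + 16 / a) - |σ| := by
    have ha16 : (0:ℝ) ≤ 16 / a := by positivity
    rcases le_or_gt (|σ|) (1 + 16 / a) with h | h
    · have h0 : (0:ℝ) ≤ a * σ ^ 4 / 16 := by positivity
      linarith
    · have hσ1 : (1:ℝ) ≤ |σ| := by linarith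
      have h16 : 16 / a ≤ |σ| := by linarith
      have h4 : |σ| ^ 4 = σ ^ 4 := by
        rw [← abs_pow]; exact abs_of_nonneg (by positivity)
      have h3 : 16 / a ≤ |σ| ^ 3 := by
        have e1 : 0 ≤ (|σ| - 1) * (|σ| * |σ|) :=
          mul_nonneg (by linarith) (mul_nonneg (abs_nonneg σ) (abs_nonneg σ))
        have e2 : 0 ≤ (|σ| - 1) * |σ| := mul_nonneg (by linarith) (abs_nonneg σ)
        nlinarith
      have h5 : 16 ≤ |σ| ^ 3 * a := (div_le_iff₀ ha).mp h3
      have h6 : |σ| ≤ a * |σ| ^ 4 / 16 := by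
        rw [le_div_iff₀ (by norm_num : (0:ℝ) < 16)]
        nlinarith [abs_nonneg σ]
      rw [h4] at h6
      linarith
  have h3 : -σ ≥ -|σ| := neg_le_neg (le_abs_self σ)
  nlinarith

/-- tail exponent bound -/
lemma stmt4_aux_tailexp (a lam : ℝ) (ha : 0 < a) (hlam : 0 ≤ lam) {s σ : ℝ}
    (hs2 : 2 * lam ≤ a * s ^ 2) (hσ : s ≤ σ) (hs0 : 0 ≤ s) :
    a * s ^ 3 / 4 * (σ - s) ≤ (a * σ ^ 4 - 2 * lam * σ ^ 2) / 8 - (a * s ^ 4 - 2 * lam * s ^ 2) / 8 := by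
  have hσ0 : 0 ≤ σ := hs0.trans hσ
  have key : 2 * a * s ^ 3 * (σ - s) ≤ a * (σ ^ 4 - s ^ 4) - 2 * lam * (σ ^ 2 - s ^ 2) := by
    have h1 : (σ ^ 2 - s ^ 2) * (a * (σ ^ 2 + s ^ 2) - 2 * lam) ≥ (σ ^ 2 - s ^ 2) * (a * σ ^ 2) := by
      have hss : 0 ≤ σ ^ 2 - s ^ 2 := by nlinarith
      have : a * (σ ^ 2 + s ^ 2) - 2 * lam ≥ a * σ ^ 2 := by nlinarith
      nlinarith
    have h2 : (σ ^ 2 - s ^ 2) * (a * σ ^ 2) ≥ 2 * a * s ^ 3 * (σ - s) := by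
      have hss : σ ^ 2 - s ^ 2 = (σ - s) * (σ + s) := by ring
      have h3 : (σ - s) * (σ + s) * (a * σ ^ 2) ≥ (σ - s) * (2 * s) * (a * s ^ 2) := by
        have h4 : 0 ≤ σ - s := by linarith
        have h5 : (σ + s) * (a * σ ^ 2) ≥ (2 * s) * (a * s ^ 2) := by
          have hp : s ^ 2 ≤ σ ^ 2 := pow_le_pow_left₀ hs0 hσ 2
          apply mul_le_mul (by linarith) (by nlinarith) (by positivity) (by linarith)
        have := mul_le_mul_of_nonneg_left h5 h4
        nlinarith
      nlinarith [hss]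
    nlinarith
  linarith

end Aux

set_option maxHeartbeats 2000000 in
/-- For `a > 0`, `λ ≥ 0`, and
`f r = (1/2) ∫₀^r exp((a s⁴ − 2λ s²)/8) (∫_s^∞ exp(−(a σ⁴ − 2λ σ²)/8) dσ) ds`,
there is a constant `Λ > 0`, depending only on `a` and `λ`, with `f'(r) ≤ Λ` and
`f(r) ≤ Λ` for all `r ≥ 0`; in particular the increasing function `f` is bounded. -/
theorem stmt4 (a lam : ℝ) (ha : 0 < a) (hlam : 0 ≤ lam) (f : ℝ → ℝ)
    (hf : ∀ r : ℝ, f r = (1 / 2) * ∫ s in (0:ℝ)..r,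
      Real.exp ((a * s ^ 4 - 2 * lam * s ^ 2) / 8) *
        ∫ σ in Set.Ioi s, Real.exp (-((a * σ ^ 4 - 2 * lam * σ ^ 2) / 8))) :
    ∃ Λ : ℝ, 0 < Λ ∧ ∀ r : ℝ, 0 ≤ r → deriv f r ≤ Λ ∧ f r ≤ Λ := by
  classical
  set g : ℝ → ℝ := fun σ => Real.exp (-((a * σ ^ 4 - 2 * lam * σ ^ 2) / 8)) with hgdef
  set I : ℝ → ℝ := fun s => ∫ σ in Set.Ioi s, g σ with hIdef
  set h : ℝ → ℝ := fun s => Real.exp ((a * s ^ 4 - 2 * lam * s ^ 2) / 8) * I s with hhdef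
  have hfe : f = fun r => (1 / 2) * ∫ s in (0:ℝ)..r, h s := funext hf
  set C : ℝ := Real.exp (lam ^ 2 / (2 * a) + (1 + 16 / a)) with hCdef
  have hC0 : 0 < C := Real.exp_pos _
  set S : ℝ := 1 + Real.sqrt (2 * lam / a) with hSdef
  have hsqrt : 0 ≤ Real.sqrt (2 * lam / a) := Real.sqrt_nonneg _
  have hS1 : (1:ℝ) ≤ S := by rw [hSdef]; linarith
  have hS0 : (0:ℝ) ≤ S := by linarith
  have hS2 : 2 * lam ≤ a * S ^ 2 := by
    have h1 : Real.sqrt (2 * lam / a) ^ 2 = 2 * lam / a := Real.sq_sqrt (by positivity)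
    have h2 : Real.sqrt (2 * lam / a) ^ 2 ≤ S ^ 2 := by
      apply pow_le_pow_left₀ hsqrt (by rw [hSdef]; linarith) 2
    rw [h1] at h2
    rw [div_le_iff₀ ha] at h2
    linarith
  set M : ℝ := Real.exp (a * S ^ 4 / 8) * C with hMdef
  have hM0 : 0 < M := mul_pos (Real.exp_pos _) hC0
  clear_value g I h C S M
  have hpoly : Continuous fun s : ℝ => (a * s ^ 4 - 2 * lam * s ^ 2) / 8 :=
    ((continuous_const.mul (continuous_pow 4)).sub
      (continuous_const.mul (continuous_pow 2))).div_const 8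
  have hgc : Continuous g := by rw [hgdef]; exact Real.continuous_exp.comp hpoly.neg
  have hgpos : ∀ σ : ℝ, 0 < g σ := by intro σ; simp only [hgdef]; exact Real.exp_pos _
  have hgb : ∀ σ : ℝ, g σ ≤ C * Real.exp (-σ) := by
    intro σ; simp only [hgdef, hCdef]; exact stmt4_aux_ptbound a lam ha hlam σ
  have hgbI : ∀ σ : ℝ, g σ ≤ C * Real.exp σ := by
    intro σ
    simp only [hgdef, hCdef]
    have := stmt4_aux_ptbound a lam ha hlam (-σ)
    have he : (a * (-σ) ^ 4 - 2 * lam * (-σ) ^ 2) = (a * σ ^ 4 - 2 * lam * σ ^ 2) := by ring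
    rw [he, neg_neg] at this
    exact this
  have hexpint : ∀ s : ℝ, IntegrableOn (fun x => C * Real.exp (-x)) (Set.Ioi s) := by
    intro s
    have h1 := exp_neg_integrableOn_Ioi s (zero_lt_one (α := ℝ))
    simp only [one_mul, neg_mul] at h1
    exact h1.const_mul C
  have hgi : ∀ s : ℝ, IntegrableOn g (Set.Ioi s) := by
    intro s
    refine Integrable.mono' (hexpint s) hgc.aestronglyMeasurable.restrict ?_
    filter_upwards with x
    rw [Real.norm_eq_abs, abs_of_pos (hgpos x)]
    exact hgb x
  have hIle : ∀ s : ℝ, I s ≤ C * Real.exp (-s) := by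
    intro s
    have h1 : I s ≤ ∫ σ in Set.Ioi s, C * Real.exp (-σ) := by
      rw [hIdef]
      exact setIntegral_mono_on (hgi s) (hexpint s) measurableSet_Ioi fun x _ => hgb x
    rwa [MeasureTheory.integral_const_mul, integral_exp_neg_Ioi] at h1
  have hInn : ∀ s : ℝ, 0 ≤ I s := by
    intro s
    rw [hIdef]
    exact setIntegral_nonneg measurableSet_Ioi fun x _ => (hgpos x).le
  have hgiIic : ∀ s : ℝ, IntegrableOn g (Set.Iic s) := by
    intro s
    refine Integrable.mono' ((integrableOn_exp_Iic s).const_mul C)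
      hgc.aestronglyMeasurable.restrict ?_
    filter_upwards with x
    rw [Real.norm_eq_abs, abs_of_pos (hgpos x)]
    exact hgbI x
  have hIeq : ∀ s : ℝ, I s = ((∫ x, g x) - ∫ x in Set.Iic 0, g x) - ∫ t in (0:ℝ)..s, g t := by
    intro s
    have h1 := intervalIntegral.integral_Iic_add_Ioi (μ := volume) (hgiIic s) (hgi s)
    have h2 := intervalIntegral.integral_Iic_sub_Iic (μ := volume) (hgiIic 0) (hgiIic s)
    rw [hIdef]
    linarith
  have hIc : Continuous I := by
    have hprim : Continuous fun s : ℝ => ∫ t in (0:ℝ)..s, g t :=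
      intervalIntegral.continuous_primitive (fun u v => hgc.intervalIntegrable u v) 0
    have : I = fun s => ((∫ x, g x) - ∫ x in Set.Iic 0, g x) - ∫ t in (0:ℝ)..s, g t :=
      funext hIeq
    rw [this]
    exact continuous_const.sub hprim
  have hhc : Continuous h := by rw [hhdef]; exact (Real.continuous_exp.comp hpoly).mul hIc
  have hhnn : ∀ s : ℝ, 0 ≤ h s := by
    intro s
    simp only [hhdef]
    exact mul_nonneg (Real.exp_pos _).le (hInn s)
  -- mid-range bound
  have hmid : ∀ s ∈ Set.Icc (0:ℝ) S, h s ≤ M := by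
    rintro s ⟨hs0, hsS⟩
    simp only [hhdef, hMdef]
    have h1 : Real.exp ((a * s ^ 4 - 2 * lam * s ^ 2) / 8) ≤ Real.exp (a * S ^ 4 / 8) := by
      apply Real.exp_le_exp.2
      have h4 : s ^ 4 ≤ S ^ 4 := pow_le_pow_left₀ hs0 hsS 4
      have h5 : 0 ≤ 2 * lam * s ^ 2 := by positivity
      have h6 : a * s ^ 4 ≤ a * S ^ 4 := by nlinarith
      linarith
    have h2 : I s ≤ C := by
      have h3 : Real.exp (-s) ≤ 1 := Real.exp_le_one_iff.2 (by linarith)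
      calc I s ≤ C * Real.exp (-s) := hIle s
        _ ≤ C * 1 := by nlinarith
        _ = C := mul_one C
    exact mul_le_mul h1 h2 (hInn s) (Real.exp_pos _).le
  -- tail bound
  have htail : ∀ s : ℝ, S ≤ s → h s ≤ 4 / (a * s ^ 3) := by
    intro s hs
    have hs1 : (1:ℝ) ≤ s := hS1.trans hs
    have hs0 : (0:ℝ) < s := by linarith
    have hb0 : 0 < a * s ^ 3 / 4 := by positivity
    have hs2' : 2 * lam ≤ a * s ^ 2 := by
      have hp : S ^ 2 ≤ s ^ 2 := pow_le_pow_left₀ hS0 hs 2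
      nlinarith [hS2]
    simp only [hhdef]
    have hpt : ∀ σ ∈ Set.Ioi s, g σ ≤
        Real.exp (-((a * s ^ 4 - 2 * lam * s ^ 2) / 8)) *
          (Real.exp (a * s ^ 3 / 4 * s) * Real.exp (-(a * s ^ 3 / 4 * σ))) := by
      intro σ hσ
      simp only [hgdef]
      rw [← Real.exp_add, ← Real.exp_add]
      apply Real.exp_le_exp.2
      have hkey := stmt4_aux_tailexp a lam ha hlam hs2' (le_of_lt hσ) hs0.le
      nlinarith [hkey]
    have hbint : IntegrableOn (fun x : ℝ => Real.exp (-(a * s ^ 3 / 4 * x))) (Set.Ioi s) := by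
      have h1 := exp_neg_integrableOn_Ioi s hb0
      simpa only [neg_mul] using h1
    have hbint2 : IntegrableOn (fun σ : ℝ =>
        Real.exp (-((a * s ^ 4 - 2 * lam * s ^ 2) / 8)) *
          (Real.exp (a * s ^ 3 / 4 * s) * Real.exp (-(a * s ^ 3 / 4 * σ)))) (Set.Ioi s) :=
      (hbint.const_mul _).const_mul _
    have hIval : (∫ σ in Set.Ioi s, Real.exp (-(a * s ^ 3 / 4 * σ))) =
        (a * s ^ 3 / 4)⁻¹ * Real.exp (-(a * s ^ 3 / 4 * s)) := by
      have h1 := integral_comp_mul_left_Ioi (fun x => Real.exp (-x)) s hb0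
      simp only [smul_eq_mul] at h1
      rw [h1, integral_exp_neg_Ioi]
    have hIb : I s ≤ Real.exp (-((a * s ^ 4 - 2 * lam * s ^ 2) / 8)) * (a * s ^ 3 / 4)⁻¹ := by
      have h1 : I s ≤ ∫ σ in Set.Ioi s,
          Real.exp (-((a * s ^ 4 - 2 * lam * s ^ 2) / 8)) *
            (Real.exp (a * s ^ 3 / 4 * s) * Real.exp (-(a * s ^ 3 / 4 * σ))) := by
        rw [hIdef]
        exact setIntegral_mono_on (hgi s) hbint2 measurableSet_Ioi hpt
      have heq : Real.exp (a * s ^ 3 / 4 * s) * ((a * s ^ 3 / 4)⁻¹ *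
          Real.exp (-(a * s ^ 3 / 4 * s))) = (a * s ^ 3 / 4)⁻¹ := by
        rw [mul_comm ((a * s ^ 3 / 4)⁻¹) (Real.exp (-(a * s ^ 3 / 4 * s))), ← mul_assoc,
          ← Real.exp_add, add_neg_cancel, Real.exp_zero, one_mul]
      rw [MeasureTheory.integral_const_mul, MeasureTheory.integral_const_mul, hIval, heq] at h1
      exact h1
    have hfin : Real.exp ((a * s ^ 4 - 2 * lam * s ^ 2) / 8) * I s ≤ (a * s ^ 3 / 4)⁻¹ := by
      have h2 := mul_le_mul_of_nonneg_left hIb (Real.exp_pos ((a * s ^ 4 - 2 * lam * s ^ 2) / 8)).le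
      rw [← mul_assoc, ← Real.exp_add, add_neg_cancel, Real.exp_zero, one_mul] at h2
      exact h2
    calc Real.exp ((a * s ^ 4 - 2 * lam * s ^ 2) / 8) * I s ≤ (a * s ^ 3 / 4)⁻¹ := hfin
      _ = 4 / (a * s ^ 3) := by rw [inv_div]
  -- derivative
  have hderiv : ∀ r : ℝ, deriv f r = 1 / 2 * h r := by
    intro r
    have hd : HasDerivAt (fun u => ∫ s in (0:ℝ)..u, h s) (h r) r :=
      intervalIntegral.integral_hasDerivAt_right (hhc.intervalIntegrable 0 r)
        (hhc.stronglyMeasurableAtFilter volume (nhds r)) hhc.continuousAt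
    rw [hfe]
    exact (hd.const_mul (1 / 2 : ℝ)).deriv
  -- bound on ∫ h over [0, u] for 0 ≤ u ≤ S
  have hfA : ∀ u : ℝ, 0 ≤ u → u ≤ S → (∫ s in (0:ℝ)..u, h s) ≤ S * M := by
    intro u hu huS
    have h1 : (∫ s in (0:ℝ)..u, h s) ≤ ∫ _ in (0:ℝ)..u, M :=
      intervalIntegral.integral_mono_on hu (hhc.intervalIntegrable 0 u)
        intervalIntegrable_const fun x hx => hmid x ⟨hx.1, hx.2.trans huS⟩
    rw [intervalIntegral.integral_const, smul_eq_mul, sub_zero] at h1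
    nlinarith
  -- bound on ∫ h over [S, r] for S ≤ r
  have hfB : ∀ r : ℝ, S ≤ r → (∫ s in S..r, h s) ≤ 2 / a := by
    intro r hr
    have hpos : ∀ x ∈ Set.uIcc S r, x ≠ 0 := by
      intro x hx
      rw [Set.uIcc_of_le hr] at hx
      have : (1:ℝ) ≤ x := hS1.trans hx.1
      linarith
    have hcont : ContinuousOn (fun x : ℝ => 4 / a * x ^ (-3 : ℤ)) (Set.uIcc S r) := by
      apply ContinuousOn.mul continuousOn_const
      intro x hx
      exact ((continuousAt_zpow₀ x (-3) (Or.inl (hpos x hx)))).continuousWithinAt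
    have hBi : IntervalIntegrable (fun x : ℝ => 4 / a * x ^ (-3 : ℤ)) volume S r :=
      hcont.intervalIntegrable
    have hmono : (∫ s in S..r, h s) ≤ ∫ s in S..r, 4 / a * s ^ (-3 : ℤ) := by
      apply intervalIntegral.integral_mono_on hr (hhc.intervalIntegrable S r) hBi
      intro x hx
      have hx1 : (1:ℝ) ≤ x := hS1.trans hx.1
      have h1 := htail x hx.1
      have h2 : 4 / a * x ^ (-3 : ℤ) = 4 / (a * x ^ 3) := by
        rw [zpow_neg]
        norm_num
        rw [div_mul_eq_div_div]
        congr 1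
      rw [h2]
      exact h1
    have hnz : (0:ℝ) ∉ Set.uIcc S r := fun hmem => hpos 0 hmem rfl
    have hval : (∫ s in S..r, (s:ℝ) ^ (-3 : ℤ)) = (r ^ (-2 : ℤ) - S ^ (-2 : ℤ)) / (-2) := by
      rw [integral_zpow (Or.inr ⟨by norm_num, hnz⟩)]
      norm_num
    have hr1 : (1:ℝ) ≤ r := hS1.trans hr
    have hS2' : (1:ℝ) ≤ S ^ 2 := by nlinarith [hS1]
    have hr2 : (0:ℝ) < r ^ 2 := by positivity
    have hle : (r ^ (-2 : ℤ) - S ^ (-2 : ℤ)) / (-2) ≤ 1 / 2 := by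
      have e1 : (r:ℝ) ^ (-2 : ℤ) = (r ^ 2)⁻¹ := by
        rw [zpow_neg]; norm_cast
      have e2 : (S:ℝ) ^ (-2 : ℤ) = (S ^ 2)⁻¹ := by
        rw [zpow_neg]; norm_cast
      rw [e1, e2]
      have p1 : (0:ℝ) < (r ^ 2)⁻¹ := by positivity
      have p2 : (0:ℝ) ≤ (S ^ 2)⁻¹ := by positivity
      have p3 : (S ^ 2)⁻¹ ≤ 1 := by
        rw [inv_le_one_iff₀]; right; exact hS2'
      nlinarith
    calc (∫ s in S..r, h s) ≤ ∫ s in S..r, 4 / a * s ^ (-3 : ℤ) := hmono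
      _ = 4 / a * ∫ s in S..r, (s:ℝ) ^ (-3 : ℤ) := intervalIntegral.integral_const_mul _ _
      _ ≤ 4 / a * (1 / 2) := by
          rw [hval]
          apply mul_le_mul_of_nonneg_left hle (by positivity)
      _ = 2 / a := by ring
  -- conclusion
  have ha4 : (0:ℝ) < 4 / a := by positivity
  have hMS : 0 ≤ M * S := mul_nonneg hM0.le hS0
  refine ⟨M * S + M + 4 / a + 1, by linarith, ?_⟩
  intro r hr
  constructor
  · rw [hderiv r]
    rcases le_total r S with hc | hc
    · have h1 := hmid r ⟨hr, hc⟩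
      nlinarith [mul_nonneg hM0.le hS0]
    · have h1 := htail r hc
      have hr1 : (1:ℝ) ≤ r := hS1.trans hc
      have hr3 : (1:ℝ) ≤ r ^ 3 := by
        nlinarith [sq_nonneg r, sq_nonneg (r - 1), mul_nonneg (sub_nonneg.2 hr1) (sq_nonneg r)]
      have h2 : 4 / (a * r ^ 3) ≤ 4 / a := by
        apply div_le_div_of_nonneg_left (by norm_num) ha
        nlinarith [hr3]
      nlinarith [mul_nonneg hM0.le hS0]
  · rw [hfe]
    rcases le_total r S with hc | hc
    · have h1 := hfA r hr hc
      simp only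
      nlinarith [mul_nonneg hM0.le hS0]
    · have hsplit : (∫ s in (0:ℝ)..r, h s) =
          (∫ s in (0:ℝ)..S, h s) + ∫ s in S..r, h s :=
        (intervalIntegral.integral_add_adjacent_intervals (hhc.intervalIntegrable 0 S)
          (hhc.intervalIntegrable S r)).symm
      have h1 := hfA S hS0 le_rfl
      have h2 := hfB r hc
      have he : 2 / a = 1 / 2 * (4 / a) := by ring
      simp only
      rw [hsplit]
      nlinarith [mul_nonneg hM0.le hS0, he]
end

section
/- Let α > 0 and β, γ, δ ∈ ℝ, and define b : ℝ → ℝ by b(u) = −α u³ + β u² + γ u + δ. Then there exist constants λ ≥ 0 and a > 0 such that for all twice continuously differentiable functions x, y : [0,1] → ℝ with x(0) = x(1) = y(0) = y(1) = 0 one has ∫₀¹ (x''(ξ) − y''(ξ))·(x(ξ) − y(ξ)) dξ + ∫₀¹ (b(x(ξ)) − b(y(ξ)))·(x(ξ) − y(ξ)) dξ ≤ λ·∫₀¹ (x(ξ) − y(ξ))² dξ − a·(∫₀¹ (x(ξ) − y(ξ))² dξ)². -/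
open MeasureTheory intervalIntegral

set_option maxHeartbeats 1000000 in
/-- Dissipativity of the reaction–diffusion drift: for `b(u) = −α u³ + β u² + γ u + δ`
with `α > 0`, there are `λ ≥ 0` and `a > 0` such that for all `C²` functions
`x, y : [0,1] → ℝ` vanishing at the endpoints,
`∫₀¹ (x''−y'')(x−y) + ∫₀¹ (b∘x − b∘y)(x−y) ≤ λ ∫₀¹ (x−y)² − a (∫₀¹ (x−y)²)²`. -/
theorem stmt6 (α β γ δ : ℝ) (hα : 0 < α) (b : ℝ → ℝ)
    (hb : ∀ u : ℝ, b u = -α * u ^ 3 + β * u ^ 2 + γ * u + δ) :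
    ∃ lam : ℝ, 0 ≤ lam ∧ ∃ a : ℝ, 0 < a ∧
      ∀ x y x' y' x'' y'' : ℝ → ℝ,
        (∀ ξ ∈ Set.Icc (0:ℝ) 1, HasDerivAt x (x' ξ) ξ) →
        (∀ ξ ∈ Set.Icc (0:ℝ) 1, HasDerivAt x' (x'' ξ) ξ) →
        (∀ ξ ∈ Set.Icc (0:ℝ) 1, HasDerivAt y (y' ξ) ξ) →
        (∀ ξ ∈ Set.Icc (0:ℝ) 1, HasDerivAt y' (y'' ξ) ξ) →
        ContinuousOn x'' (Set.Icc (0:ℝ) 1) → ContinuousOn y'' (Set.Icc (0:ℝ) 1) →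
        x 0 = 0 → x 1 = 0 → y 0 = 0 → y 1 = 0 →
        (∫ ξ in (0:ℝ)..1, (x'' ξ - y'' ξ) * (x ξ - y ξ)) +
          (∫ ξ in (0:ℝ)..1, (b (x ξ) - b (y ξ)) * (x ξ - y ξ)) ≤
        lam * (∫ ξ in (0:ℝ)..1, (x ξ - y ξ) ^ 2) -
          a * (∫ ξ in (0:ℝ)..1, (x ξ - y ξ) ^ 2) ^ 2 := by
  refine ⟨2 * β ^ 2 / α + |γ|, by positivity, α / 8, by positivity, ?_⟩
  intro x y x' y' x'' y'' hx hx' hy hy' hxc hyc hx0 hx1 hy0 hy1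
  have huIcc : Set.uIcc (0:ℝ) 1 = Set.Icc (0:ℝ) 1 := Set.uIcc_of_le (by norm_num)
  have hzc : ContinuousOn (fun ξ => x ξ - y ξ) (Set.Icc (0:ℝ) 1) := fun ξ hξ =>
    (((hx ξ hξ).sub (hy ξ hξ)).continuousAt).continuousWithinAt
  have hz'c : ContinuousOn (fun ξ => x' ξ - y' ξ) (Set.Icc (0:ℝ) 1) := fun ξ hξ =>
    (((hx' ξ hξ).sub (hy' ξ hξ)).continuousAt).continuousWithinAt
  have hz''c : ContinuousOn (fun ξ => x'' ξ - y'' ξ) (Set.Icc (0:ℝ) 1) := hxc.sub hyc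
  have int_z2 : IntervalIntegrable (fun ξ => (x ξ - y ξ) ^ 2) volume 0 1 := by
    apply ContinuousOn.intervalIntegrable; rw [huIcc]; exact hzc.pow 2
  have int_z4 : IntervalIntegrable (fun ξ => ((x ξ - y ξ) ^ 2) ^ 2) volume 0 1 := by
    apply ContinuousOn.intervalIntegrable; rw [huIcc]; exact (hzc.pow 2).pow 2
  have int_z' : IntervalIntegrable (fun ξ => x' ξ - y' ξ) volume 0 1 := by
    apply ContinuousOn.intervalIntegrable; rw [huIcc]; exact hz'c
  have int_z'' : IntervalIntegrable (fun ξ => x'' ξ - y'' ξ) volume 0 1 := by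
    apply ContinuousOn.intervalIntegrable; rw [huIcc]; exact hz''c
  -- Term 1: integration by parts
  have ibp := intervalIntegral.integral_mul_deriv_eq_deriv_mul
      (u := fun ξ => x ξ - y ξ) (u' := fun ξ => x' ξ - y' ξ)
      (v := fun ξ => x' ξ - y' ξ) (v' := fun ξ => x'' ξ - y'' ξ)
      (fun ξ hξ => (hx ξ (huIcc ▸ hξ)).sub (hy ξ (huIcc ▸ hξ)))
      (fun ξ hξ => (hx' ξ (huIcc ▸ hξ)).sub (hy' ξ (huIcc ▸ hξ)))
      int_z' int_z''
  have hterm1 : (∫ ξ in (0:ℝ)..1, (x'' ξ - y'' ξ) * (x ξ - y ξ)) ≤ 0 := by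
    have e : (∫ ξ in (0:ℝ)..1, (x'' ξ - y'' ξ) * (x ξ - y ξ))
        = ∫ ξ in (0:ℝ)..1, (x ξ - y ξ) * (x'' ξ - y'' ξ) := by
      congr 1; ext ξ; ring
    have hnn : (0:ℝ) ≤ ∫ ξ in (0:ℝ)..1, (x' ξ - y' ξ) * (x' ξ - y' ξ) :=
      intervalIntegral.integral_nonneg (by norm_num) (fun ξ _ => mul_self_nonneg _)
    rw [e, ibp]
    simp only [hx0, hx1, hy0, hy1, sub_self, zero_mul, mul_zero, sub_zero, zero_sub]
    linarith
  -- pointwise dissipativity of the nonlinearity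
  have key : ∀ ξ ∈ Set.Icc (0:ℝ) 1, (b (x ξ) - b (y ξ)) * (x ξ - y ξ) ≤
      (2 * β ^ 2 / α + |γ|) * (x ξ - y ξ) ^ 2 - α / 8 * ((x ξ - y ξ) ^ 2) ^ 2 := by
    intro ξ _
    set u := x ξ with hu
    set v := y ξ with hv
    rw [hb, hb]
    have hA : α * (2 * β ^ 2 / α) * (u - v) ^ 2 = 2 * β ^ 2 * (u - v) ^ 2 := by
      field_simp
    nlinarith [hα, mul_nonneg (sq_nonneg (u - v)) (sq_nonneg (α * (u + v) - 4 * β)),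
      mul_nonneg (mul_nonneg hα.le (sq_nonneg (u - v))) (sub_nonneg.mpr (le_abs_self γ)),
      mul_nonneg (mul_nonneg hα.le hα.le) (mul_nonneg (sq_nonneg (u - v)) (sq_nonneg (u - v))),
      mul_nonneg (mul_nonneg hα.le hα.le) (mul_nonneg (sq_nonneg (u - v)) (sq_nonneg (u + v))),
      hA]
  have hbc : Continuous b := by
    have hbe : b = fun u => -α * u ^ 3 + β * u ^ 2 + γ * u + δ := funext hb
    rw [hbe]; continuity
  have hxc0 : ContinuousOn x (Set.Icc (0:ℝ) 1) := fun ξ hξ =>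
    ((hx ξ hξ).continuousAt).continuousWithinAt
  have hyc0 : ContinuousOn y (Set.Icc (0:ℝ) 1) := fun ξ hξ =>
    ((hy ξ hξ).continuousAt).continuousWithinAt
  have int_lhs2 : IntervalIntegrable (fun ξ => (b (x ξ) - b (y ξ)) * (x ξ - y ξ)) volume 0 1 := by
    apply ContinuousOn.intervalIntegrable; rw [huIcc]
    exact ((hbc.comp_continuousOn hxc0).sub (hbc.comp_continuousOn hyc0)).mul hzc
  have int_rhs2 : IntervalIntegrable
      (fun ξ => (2 * β ^ 2 / α + |γ|) * (x ξ - y ξ) ^ 2 - α / 8 * ((x ξ - y ξ) ^ 2) ^ 2)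
      volume 0 1 := (int_z2.const_mul _).sub (int_z4.const_mul _)
  have hterm2 : (∫ ξ in (0:ℝ)..1, (b (x ξ) - b (y ξ)) * (x ξ - y ξ)) ≤
      (2 * β ^ 2 / α + |γ|) * (∫ ξ in (0:ℝ)..1, (x ξ - y ξ) ^ 2) -
        α / 8 * (∫ ξ in (0:ℝ)..1, ((x ξ - y ξ) ^ 2) ^ 2) := by
    have h := intervalIntegral.integral_mono_on (by norm_num) int_lhs2 int_rhs2 key
    rwa [intervalIntegral.integral_sub (int_z2.const_mul _) (int_z4.const_mul _),
      intervalIntegral.integral_const_mul, intervalIntegral.integral_const_mul] at h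
  -- Cauchy–Schwarz on [0,1]
  have cs : (∫ ξ in (0:ℝ)..1, (x ξ - y ξ) ^ 2) ^ 2 ≤
      ∫ ξ in (0:ℝ)..1, ((x ξ - y ξ) ^ 2) ^ 2 := by
    set m := ∫ ξ in (0:ℝ)..1, (x ξ - y ξ) ^ 2 with hm
    have h0 : (0:ℝ) ≤ ∫ ξ in (0:ℝ)..1, ((x ξ - y ξ) ^ 2 - m) ^ 2 :=
      intervalIntegral.integral_nonneg (by norm_num) (fun ξ _ => sq_nonneg _)
    have e : (fun ξ => ((x ξ - y ξ) ^ 2 - m) ^ 2)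
        = fun ξ => (((x ξ - y ξ) ^ 2) ^ 2 - 2 * m * (x ξ - y ξ) ^ 2) + m ^ 2 :=
      funext fun ξ => by ring
    rw [e, intervalIntegral.integral_add (int_z4.sub (int_z2.const_mul _))
        intervalIntegrable_const,
      intervalIntegral.integral_sub int_z4 (int_z2.const_mul _),
      intervalIntegral.integral_const_mul, intervalIntegral.integral_const] at h0
    simp only [sub_zero, one_smul, smul_eq_mul] at h0
    nlinarith [h0]
  have hcs' : α / 8 * (∫ ξ in (0:ℝ)..1, (x ξ - y ξ) ^ 2) ^ 2 ≤
      α / 8 * ∫ ξ in (0:ℝ)..1, ((x ξ - y ξ) ^ 2) ^ 2 :=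
    mul_le_mul_of_nonneg_left cs (by positivity)
  linarith
end

section
/- Fix R > 0 and define F_R : L⁴(0,1) → L²(0,1) by F_R(x) = x² if ‖x‖_{L⁴} ≤ R and F_R(x) = R²·x²/‖x‖²_{L⁴} if ‖x‖_{L⁴} ≥ R. Then for every γ ∈ [0,1] and all x, y ∈ L⁴(0,1) one has ‖F_R(x) − F_R(y)‖_{L²} ≤ (2R)^{2−γ}·‖x − y‖_{L⁴}^γ. -/
/-!
Write `F_R(x) = c • x²` with `c = (min(‖x‖, R) / ‖x‖)²`, so that `‖F_R(x)‖₂ = min(‖x‖, R)² ≤ R²`.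
The squares live in the Hilbert space `L²`, where `‖c • P - d • Q‖²` is affine in `⟪P, Q⟫`; hence
comparing it with `‖P - Q‖²` reduces to the collinear cases `⟪P, Q⟫ = ±‖P‖ ‖Q‖`, which follow from
`t ↦ min(t, R)²` being `2R`-Lipschitz. This gives
`(‖x‖ + ‖y‖) ‖F_R(x) - F_R(y)‖ ≤ 2R ‖x² - y²‖₂ ≤ 2R ‖x - y‖₄ (‖x‖₄ + ‖y‖₄)` by Hölder, so `F_R` is
`2R`-Lipschitz. Interpolating between this and `‖F_R(x) - F_R(y)‖ ≤ (2R)²` gives the claim.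
-/

open MeasureTheory
open scoped ENNReal

lemma abs_min_sq_sub_min_sq_le {A B R : ℝ} (hA : 0 ≤ A) (hB : 0 ≤ B) (hR : 0 ≤ R) :
    |min A R ^ 2 - min B R ^ 2| ≤ 2 * R * |A - B| := by
  have hdiff : |min A R - min B R| ≤ |A - B| := by
    simpa using abs_min_sub_min_le_max A R B R
  have hsum : |min A R + min B R| ≤ 2 * R := by
    rw [abs_of_nonneg (add_nonneg (le_min hA hR) (le_min hB hR))]
    linarith [min_le_right A R, min_le_right B R]
  calc |min A R ^ 2 - min B R ^ 2| = |min A R + min B R| * |min A R - min B R| := by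
        rw [← abs_mul, sq_sub_sq]
    _ ≤ 2 * R * |A - B| := mul_le_mul hsum hdiff (abs_nonneg _) (by positivity)

lemma min_sq_le_mul {A R : ℝ} (hA : 0 ≤ A) (hR : 0 ≤ R) : min A R ^ 2 ≤ R * A := by
  rw [sq]
  exact mul_le_mul (min_le_right A R) (min_le_left A R) (le_min hA hR) hR

lemma le_rpow_mul_rpow_of_le_of_le {D M N γ : ℝ} (hD : 0 ≤ D) (hM : D ≤ M) (hN : D ≤ N)
    (hγ0 : 0 ≤ γ) (hγ1 : γ ≤ 1) : D ≤ M ^ (1 - γ) * N ^ γ :=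
  calc D = D ^ (1 - γ) * D ^ γ := by
        rw [← Real.rpow_add' hD (by norm_num), sub_add_cancel, Real.rpow_one]
    _ ≤ M ^ (1 - γ) * N ^ γ :=
      mul_le_mul (Real.rpow_le_rpow hD hM (by linarith)) (Real.rpow_le_rpow hD hN hγ0)
        (Real.rpow_nonneg hD γ) (Real.rpow_nonneg (hD.trans hM) _)

lemma mul_norm_smul_sub_smul_le {H : Type*} [NormedAddCommGroup H] [InnerProductSpace ℝ H]
    {P Q : H} {c d L K : ℝ} (hc : 0 ≤ c) (hd : 0 ≤ d) (hL : 0 ≤ L) (hK : 0 ≤ K)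
    (hsub : L * |c * ‖P‖ - d * ‖Q‖| ≤ K * |‖P‖ - ‖Q‖|)
    (hadd : L * (c * ‖P‖ + d * ‖Q‖) ≤ K * (‖P‖ + ‖Q‖)) :
    L * ‖c • P - d • Q‖ ≤ K * ‖P - Q‖ := by
  set s := inner ℝ P Q
  have hs : |s| ≤ ‖P‖ * ‖Q‖ := abs_real_inner_le_norm P Q
  have hlhs : ‖c • P - d • Q‖ ^ 2 = c ^ 2 * ‖P‖ ^ 2 - 2 * (c * d) * s + d ^ 2 * ‖Q‖ ^ 2 := by
    rw [norm_sub_sq_real, norm_smul, norm_smul, real_inner_smul_left, real_inner_smul_right,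
      Real.norm_of_nonneg hc, Real.norm_of_nonneg hd]
    ring
  have hrhs : ‖P - Q‖ ^ 2 = ‖P‖ ^ 2 - 2 * s + ‖Q‖ ^ 2 := norm_sub_sq_real P Q
  have hsub' := pow_le_pow_left₀ (by positivity) hsub 2
  have hadd' := pow_le_pow_left₀ (by positivity) hadd 2
  rw [mul_pow, mul_pow, sq_abs, sq_abs] at hsub'
  rw [mul_pow, mul_pow] at hadd'
  -- both squared sides are affine in `s`; the sign of the slope decides which of `s = ±‖P‖ ‖Q‖`
  -- is the worst case
  have key : (L * ‖c • P - d • Q‖) ^ 2 ≤ (K * ‖P - Q‖) ^ 2 := by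
    rw [mul_pow, mul_pow, hlhs, hrhs]
    rcases le_total (L ^ 2 * (c * d)) (K ^ 2) with h | h
    · nlinarith [mul_nonneg (sub_nonneg.2 h) (sub_nonneg.2 (abs_le.1 hs).2)]
    · nlinarith [mul_nonneg (sub_nonneg.2 h) (neg_le_iff_add_nonneg.1 (abs_le.1 hs).1)]
  exact (pow_le_pow_iff_left₀ (by positivity) (by positivity) two_ne_zero).1 key

instance : Fact ((1 : ℝ≥0∞) ≤ 4) := ⟨by norm_num⟩

instance : ENNReal.HolderTriple 4 4 2 :=
  ⟨by rw [← two_mul, show (4:ℝ≥0∞) = 2 * 2 by norm_num, ENNReal.mul_inv (by simp) (by simp),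
    ← mul_assoc, ENNReal.mul_inv_cancel (by simp) (by simp), one_mul]⟩

namespace MeasureTheory.Lp

variable {α : Type*} {m : MeasurableSpace α} {μ : Measure α}

lemma coeFn_smul_self {p r : ℝ≥0∞} [ENNReal.HolderTriple p p r] (x : Lp ℝ p μ) :
    (x • x : Lp ℝ r μ) =ᵐ[μ] fun ξ => x ξ ^ 2 := by
  filter_upwards [coeFn_lpSMul (r := r) x x] with ξ hξ
  rw [hξ, Pi.smul_apply', smul_eq_mul, sq]

lemma norm_smul_self (x : Lp ℝ 4 μ) : ‖(x • x : Lp ℝ 2 μ)‖ = ‖x‖ ^ 2 := by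
  have h := eLpNorm_norm_rpow (p := 2) (μ := μ) x two_pos
  rw [show (2:ℝ≥0∞) * ENNReal.ofReal 2 = 4 by norm_num] at h
  simp only [Real.norm_eq_abs, Real.rpow_two, sq_abs] at h
  rw [Lp.norm_def, Lp.norm_def, eLpNorm_congr_ae (coeFn_smul_self x), h, ← ENNReal.toReal_rpow,
    Real.rpow_two]

lemma smul_self_sub_smul_self {p r : ℝ≥0∞} [ENNReal.HolderTriple p p r] (x y : Lp ℝ p μ) :
    (x • x : Lp ℝ r μ) - y • y = (x - y) • (x + y) := by
  ext1
  filter_upwards [coeFn_sub (x • x : Lp ℝ r μ) (y • y), coeFn_smul_self (r := r) x,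
    coeFn_smul_self (r := r) y, coeFn_lpSMul (r := r) (x - y) (x + y), coeFn_sub x y,
    coeFn_add x y] with ξ h h₁ h₂ h₃ h₄ h₅
  rw [h, Pi.sub_apply, h₁, h₂, h₃, Pi.smul_apply', h₄, h₅, Pi.sub_apply, Pi.add_apply,
    smul_eq_mul]
  ring

lemma norm_smul_self_sub_smul_self_le {p r : ℝ≥0∞} [Fact (1 ≤ p)] [ENNReal.HolderTriple p p r]
    (x y : Lp ℝ p μ) : ‖(x • x : Lp ℝ r μ) - y • y‖ ≤ ‖x - y‖ * (‖x‖ + ‖y‖) := by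
  rw [smul_self_sub_smul_self]
  exact (Lp.norm_smul_le _ _).trans (mul_le_mul_of_nonneg_left (norm_add_le x y) (norm_nonneg _))

/-- `F_R(x) = (min(‖x‖, R) / ‖x‖)² x²`, where the junk value `0 / 0 = 0` gives `F_R(0) = 0`. -/
noncomputable def truncSq (R : ℝ) (x : Lp ℝ 4 μ) : Lp ℝ 2 μ :=
  (min ‖x‖ R ^ 2 / ‖x‖ ^ 2) • (x • x)

lemma truncSq_of_norm_le {R : ℝ} {x : Lp ℝ 4 μ} (h : ‖x‖ ≤ R) : truncSq R x = x • x := by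
  rcases eq_or_ne x 0 with rfl | hx
  · simp [truncSq]
  · rw [truncSq, min_eq_left h, div_self (pow_ne_zero 2 (norm_ne_zero_iff.2 hx)), one_smul]

lemma truncSq_of_le_norm {R : ℝ} {x : Lp ℝ 4 μ} (h : R ≤ ‖x‖) :
    truncSq R x = (R ^ 2 / ‖x‖ ^ 2) • (x • x) := by
  rw [truncSq, min_eq_right h]

lemma truncSq_coeff_mul_norm {R : ℝ} (hR : 0 ≤ R) (x : Lp ℝ 4 μ) :
    min ‖x‖ R ^ 2 / ‖x‖ ^ 2 * ‖(x • x : Lp ℝ 2 μ)‖ = min ‖x‖ R ^ 2 := by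
  rw [norm_smul_self]
  rcases eq_or_ne ‖x‖ 0 with hx | hx
  · simp [hx, hR]
  · exact div_mul_cancel₀ _ (by positivity)

lemma norm_truncSq {R : ℝ} (hR : 0 ≤ R) (x : Lp ℝ 4 μ) : ‖truncSq R x‖ = min ‖x‖ R ^ 2 := by
  rw [truncSq, norm_smul, Real.norm_of_nonneg (by positivity), truncSq_coeff_mul_norm hR]

lemma norm_truncSq_sub_le_sq {R : ℝ} (hR : 0 ≤ R) (x y : Lp ℝ 4 μ) :
    ‖truncSq R x - truncSq R y‖ ≤ (2 * R) ^ 2 := by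
  have hx : min ‖x‖ R ^ 2 ≤ R ^ 2 :=
    pow_le_pow_left₀ (le_min (norm_nonneg x) hR) (min_le_right _ _) 2
  have hy : min ‖y‖ R ^ 2 ≤ R ^ 2 :=
    pow_le_pow_left₀ (le_min (norm_nonneg y) hR) (min_le_right _ _) 2
  calc ‖truncSq R x - truncSq R y‖ ≤ ‖truncSq R x‖ + ‖truncSq R y‖ := norm_sub_le _ _
    _ ≤ (2 * R) ^ 2 := by rw [norm_truncSq hR, norm_truncSq hR]; nlinarith

lemma norm_truncSq_sub_le {R : ℝ} (hR : 0 ≤ R) (x y : Lp ℝ 4 μ) :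
    ‖truncSq R x - truncSq R y‖ ≤ 2 * R * ‖x - y‖ := by
  rcases (add_nonneg (norm_nonneg x) (norm_nonneg y)).eq_or_lt with h0 | h0
  · obtain ⟨rfl, rfl⟩ : x = 0 ∧ y = 0 := by
      constructor <;> apply norm_eq_zero.1 <;> linarith [norm_nonneg x, norm_nonneg y]
    simp
  have hsub : (‖x‖ + ‖y‖) * |min ‖x‖ R ^ 2 - min ‖y‖ R ^ 2| ≤ 2 * R * |‖x‖ ^ 2 - ‖y‖ ^ 2| :=
    calc (‖x‖ + ‖y‖) * |min ‖x‖ R ^ 2 - min ‖y‖ R ^ 2|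
        ≤ (‖x‖ + ‖y‖) * (2 * R * |‖x‖ - ‖y‖|) :=
          mul_le_mul_of_nonneg_left
            (abs_min_sq_sub_min_sq_le (norm_nonneg x) (norm_nonneg y) hR) h0.le
      _ = 2 * R * |‖x‖ ^ 2 - ‖y‖ ^ 2| := by
          rw [sq_sub_sq, abs_mul, abs_of_nonneg h0.le]; ring
  have hadd : (‖x‖ + ‖y‖) * (min ‖x‖ R ^ 2 + min ‖y‖ R ^ 2) ≤
      2 * R * (‖x‖ ^ 2 + ‖y‖ ^ 2) := by
    nlinarith [min_sq_le_mul (norm_nonneg x) hR, min_sq_le_mul (norm_nonneg y) hR,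
      sq_nonneg (‖x‖ - ‖y‖)]
  have hsq : (‖x‖ + ‖y‖) * ‖truncSq R x - truncSq R y‖ ≤
      2 * R * ‖(x • x : Lp ℝ 2 μ) - y • y‖ := by
    refine mul_norm_smul_sub_smul_le (by positivity) (by positivity) h0.le (by positivity) ?_ ?_
      <;> rwa [truncSq_coeff_mul_norm hR, truncSq_coeff_mul_norm hR, norm_smul_self,
        norm_smul_self]
  refine le_of_mul_le_mul_left ?_ h0
  calc (‖x‖ + ‖y‖) * ‖truncSq R x - truncSq R y‖
        ≤ 2 * R * ‖(x • x : Lp ℝ 2 μ) - y • y‖ := hsq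
    _ ≤ 2 * R * (‖x - y‖ * (‖x‖ + ‖y‖)) := by gcongr; exact norm_smul_self_sub_smul_self_le x y
    _ = (‖x‖ + ‖y‖) * (2 * R * ‖x - y‖) := by ring

lemma eq_truncSq {R : ℝ} {F : Lp ℝ 4 μ → Lp ℝ 2 μ}
    (hF1 : ∀ x, ‖x‖ ≤ R → F x =ᵐ[μ] fun ξ => x ξ ^ 2)
    (hF2 : ∀ x, R ≤ ‖x‖ → F x =ᵐ[μ] fun ξ => R ^ 2 * x ξ ^ 2 / ‖x‖ ^ 2) :
    F = truncSq R := by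
  funext x
  ext1
  rcases le_total ‖x‖ R with h | h
  · rw [truncSq_of_norm_le h]
    exact (hF1 x h).trans (coeFn_smul_self x).symm
  · rw [truncSq_of_le_norm h]
    filter_upwards [hF2 x h, coeFn_smul (R ^ 2 / ‖x‖ ^ 2) (x • x : Lp ℝ 2 μ),
      coeFn_smul_self (r := 2) x] with ξ h₁ h₂ h₃
    rw [h₁, h₂, Pi.smul_apply, h₃, smul_eq_mul]
    ring

end MeasureTheory.Lp

/-- The truncated Burgers nonlinearity `F_R : L⁴(0,1) → L²(0,1)`, equal (a.e.) to `x²` when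
`‖x‖_{L⁴} ≤ R` and to `R² x² / ‖x‖²_{L⁴}` when `‖x‖_{L⁴} ≥ R`, satisfies
`‖F_R(x) − F_R(y)‖_{L²} ≤ (2R)^{2−γ} ‖x − y‖_{L⁴}^γ` for every `γ ∈ [0,1]`. -/
theorem stmt9 (R : ℝ) (hR : 0 < R)
    (F : Lp ℝ 4 (volume.restrict (Set.Ioo (0:ℝ) 1)) →
      Lp ℝ 2 (volume.restrict (Set.Ioo (0:ℝ) 1)))
    (hF1 : ∀ x, ‖x‖ ≤ R → (F x : ℝ → ℝ) =ᵐ[volume.restrict (Set.Ioo (0:ℝ) 1)]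
      fun ξ => (x : ℝ → ℝ) ξ ^ 2)
    (hF2 : ∀ x, R ≤ ‖x‖ → (F x : ℝ → ℝ) =ᵐ[volume.restrict (Set.Ioo (0:ℝ) 1)]
      fun ξ => R ^ 2 * (x : ℝ → ℝ) ξ ^ 2 / ‖x‖ ^ 2) :
    ∀ γ : ℝ, γ ∈ Set.Icc (0:ℝ) 1 → ∀ x y,
      ‖F x - F y‖ ≤ (2 * R) ^ (2 - γ) * ‖x - y‖ ^ γ := by
  rintro γ ⟨hγ0, hγ1⟩ x y
  obtain rfl := Lp.eq_truncSq hF1 hF2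
  have h2R : 0 ≤ 2 * R := by positivity
  calc ‖Lp.truncSq R x - Lp.truncSq R y‖
      ≤ ((2 * R) ^ 2) ^ (1 - γ) * (2 * R * ‖x - y‖) ^ γ :=
        le_rpow_mul_rpow_of_le_of_le (norm_nonneg _) (Lp.norm_truncSq_sub_le_sq hR.le x y)
          (Lp.norm_truncSq_sub_le hR.le x y) hγ0 hγ1
    _ = (2 * R) ^ (2 - γ) * ‖x - y‖ ^ γ := by
        rw [Real.mul_rpow h2R (norm_nonneg (x - y)), ← Real.rpow_natCast, ← Real.rpow_mul h2R,
          ← mul_assoc, ← Real.rpow_add (by positivity)]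
        congr 2
        push_cast
        ring
end

section
/- Fix R > 0 and define F_R : L⁴(0,1) → L²(0,1) by F_R(x) = x² if ‖x‖_{L⁴} ≤ R and F_R(x) = R²·x²/‖x‖²_{L⁴} if ‖x‖_{L⁴} ≥ R. Then there exist α > 0, β > 0 with 2α/(1−β) ∈ [1,2), and a constant c_R > 0, such that for all continuously differentiable functions x, y : [0,1] → ℝ with x(0) = x(1) = y(0) = y(1) = 0 one has ‖F_R(x) − F_R(y)‖_{L²} ≤ c_R·‖x − y‖_{L²}^α·(∫₀¹ (x'(ξ) − y'(ξ))² dξ)^{β/2}. -/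
/-!
`F_R(x)` is the pointwise square of the radial retraction `r x` of `x` onto the closed ball of
radius `R` in `L⁴`, and a radial retraction is `2`-Lipschitz in every normed space. Writing
`F_R(x) - F_R(y) = (r x + r y) (r x - r y)`, Hölder's inequality with exponents `(4, 4; 2)` gives
`‖F_R(x) - F_R(y)‖₂ ≤ 2R · min (2R) (2‖x - y‖₄) ≤ 2R · (2R)^(1/3) · (2‖x - y‖₄)^(2/3)`.
Finally `‖x - y‖₄ ≤ ‖x - y‖_∞`, and Agmon's inequality `‖z‖²_∞ ≤ 2 ‖z‖₂ ‖z'‖₂` for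
`z(0) = 0` yields the claim with `α = β = 1/3`.
-/

open MeasureTheory intervalIntegral Set
open scoped ENNReal

section RadialRetraction

variable {E : Type*} [NormedAddCommGroup E] [NormedSpace ℝ E]

noncomputable def radialScale (R t : ℝ) : ℝ := if t ≤ R then 1 else R / t

noncomputable def radialRetraction (R : ℝ) (v : E) : E := radialScale R ‖v‖ • v

variable {R : ℝ}

lemma norm_radialRetraction_le (hR : 0 ≤ R) (v : E) : ‖radialRetraction R v‖ ≤ R := by
  unfold radialRetraction radialScale
  split_ifs with hv
  · simpa using hv
  · rw [norm_smul, Real.norm_of_nonneg (by positivity), div_mul_cancel₀ _ (by linarith)]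

lemma norm_radialRetraction_sub_self (hR : 0 ≤ R) {v : E} (hv : R < ‖v‖) :
    ‖radialRetraction R v - v‖ = ‖v‖ - R := by
  have hv0 : 0 < ‖v‖ := hR.trans_lt hv
  have : radialRetraction R v - v = (R / ‖v‖ - 1) • v := by
    simp only [radialRetraction, radialScale, if_neg hv.not_ge, sub_smul, one_smul]
  rw [this, norm_smul, Real.norm_of_nonpos, neg_sub, sub_mul, div_mul_cancel₀ _ hv0.ne', one_mul]
  rw [sub_nonpos, div_le_one hv0]
  exact hv.le

lemma norm_radialRetraction_sub_le_of_lt_of_le (hR : 0 ≤ R) {v w : E} (hv : R < ‖v‖)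
    (hw : ‖w‖ ≤ R) :
    ‖radialRetraction R v - radialRetraction R w‖ ≤ 2 * ‖v - w‖ := by
  have hrw : radialRetraction R w = w := by simp [radialRetraction, radialScale, hw]
  calc ‖radialRetraction R v - radialRetraction R w‖
      ≤ ‖radialRetraction R v - v‖ + ‖v - w‖ := by
        rw [hrw]
        exact norm_sub_le_norm_sub_add_norm_sub _ _ _
    _ ≤ 2 * ‖v - w‖ := by
        rw [norm_radialRetraction_sub_self hR hv]
        linarith [norm_sub_norm_le v w]

lemma norm_radialRetraction_sub_le_of_lt_of_lt (hR : 0 ≤ R) {v w : E} (hv : R < ‖v‖)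
    (hw : R < ‖w‖) :
    ‖radialRetraction R v - radialRetraction R w‖ ≤ 2 * ‖v - w‖ := by
  have hv0 : 0 < ‖v‖ := hR.trans_lt hv
  have hw0 : 0 < ‖w‖ := hR.trans_lt hw
  have hsplit : radialRetraction R v - radialRetraction R w
      = (R / ‖v‖) • (v - w) + (R / ‖v‖ - R / ‖w‖) • w := by
    simp only [radialRetraction, radialScale, if_neg hv.not_ge, if_neg hw.not_ge]
    module
  have hdiff : |R / ‖v‖ - R / ‖w‖| * ‖w‖ = R / ‖v‖ * |‖v‖ - ‖w‖| := by
    have : R / ‖v‖ - R / ‖w‖ = R / ‖v‖ / ‖w‖ * (‖w‖ - ‖v‖) := by field_simp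
    rw [this, abs_mul, abs_of_nonneg (by positivity), abs_sub_comm]
    field_simp
  have hRv : R / ‖v‖ ≤ 1 := (div_le_one hv0).2 hv.le
  calc ‖radialRetraction R v - radialRetraction R w‖
      ≤ R / ‖v‖ * ‖v - w‖ + |R / ‖v‖ - R / ‖w‖| * ‖w‖ := by
        rw [hsplit]
        refine (norm_add_le _ _).trans ?_
        rw [norm_smul, norm_smul, Real.norm_of_nonneg (by positivity), Real.norm_eq_abs]
    _ ≤ R / ‖v‖ * ‖v - w‖ + R / ‖v‖ * ‖v - w‖ := by
        rw [hdiff]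
        gcongr
        exact abs_norm_sub_norm_le v w
    _ ≤ 2 * ‖v - w‖ := by nlinarith [norm_nonneg (v - w)]

lemma norm_radialRetraction_sub_le (hR : 0 ≤ R) (v w : E) :
    ‖radialRetraction R v - radialRetraction R w‖ ≤ 2 * ‖v - w‖ := by
  rcases le_or_gt ‖v‖ R with hv | hv <;> rcases le_or_gt ‖w‖ R with hw | hw
  · simp only [radialRetraction, radialScale, hv, hw, if_true, one_smul]
    linarith [norm_nonneg (v - w)]
  · rw [norm_sub_rev, norm_sub_rev v]
    exact norm_radialRetraction_sub_le_of_lt_of_le hR hw hv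
  · exact norm_radialRetraction_sub_le_of_lt_of_le hR hv hw
  · exact norm_radialRetraction_sub_le_of_lt_of_lt hR hv hw

end RadialRetraction

lemma min_le_mul_sq_rpow_third {a b : ℝ} (ha : 0 ≤ a) (hb : 0 ≤ b) :
    min a b ≤ (a * b ^ 2) ^ (1 / 3 : ℝ) := by
  have hm : 0 ≤ min a b := le_min ha hb
  rw [one_div, Real.le_rpow_inv_iff_of_pos hm (by positivity) three_pos]
  calc min a b ^ (3 : ℝ) = min a b * min a b ^ 2 := by norm_cast; ring
    _ ≤ a * b ^ 2 := mul_le_mul (min_le_left a b) (pow_le_pow_left₀ hm (min_le_right a b) 2)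
        (sq_nonneg _) ha

instance fact_one_le_four_ennreal : Fact (1 ≤ (4 : ℝ≥0∞)) := ⟨by norm_num⟩

instance ENNReal.HolderTriple.four_four_two : ENNReal.HolderTriple 4 4 2 where
  inv_add_inv_eq_inv := by
    rw [← two_mul, show (4 : ℝ≥0∞) = 2 * 2 by norm_num, ENNReal.mul_inv (by simp) (by simp),
      ← mul_assoc, ENNReal.mul_inv_cancel (by simp) (by simp), one_mul]

namespace MeasureTheory.Lp

variable {α : Type*} [MeasurableSpace α] {μ : Measure α}

lemma norm_eq_integral_pow {p : ℝ≥0∞} {n : ℕ} (hpn : p = n) (hn : Even n) (hn0 : n ≠ 0)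
    (f : Lp ℝ p μ) : ‖f‖ = (∫ a, f a ^ n ∂μ) ^ (1 / n : ℝ) := by
  subst hpn
  rw [norm_def, (Lp.memLp f).eLpNorm_eq_integral_rpow_norm (by simpa using hn0) (by simp),
    ENNReal.toReal_ofReal (by positivity), ENNReal.toReal_natCast, one_div]
  congr 2 with a
  rw [Real.rpow_natCast, Real.norm_eq_abs, hn.pow_abs]

lemma coeFn_radialRetraction {p : ℝ≥0∞} [Fact (1 ≤ p)] (R : ℝ) (f : Lp ℝ p μ) :
    ⇑(radialRetraction R f : Lp ℝ p μ) =ᵐ[μ] fun a => radialScale R ‖f‖ * f a :=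
  Lp.coeFn_smul _ f

lemma integral_sq_sub_sq_le (f g : Lp ℝ 4 μ) :
    (∫ a, (f a ^ 2 - g a ^ 2) ^ 2 ∂μ) ^ (1 / 2 : ℝ) ≤ ‖f + g‖ * ‖f - g‖ := by
  have hprod : ((f + g) • (f - g) : Lp ℝ 2 μ) =ᵐ[μ] fun a => f a ^ 2 - g a ^ 2 := by
    filter_upwards [Lp.coeFn_lpSMul (r := 2) (f + g) (f - g), Lp.coeFn_add f g,
      Lp.coeFn_sub f g] with a h hadd hsub
    simp only [h, Pi.smul_apply', hadd, hsub, smul_eq_mul, Pi.add_apply, Pi.sub_apply]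
    ring
  calc (∫ a, (f a ^ 2 - g a ^ 2) ^ 2 ∂μ) ^ (1 / 2 : ℝ)
      = ‖((f + g) • (f - g) : Lp ℝ 2 μ)‖ := by
        rw [norm_eq_integral_pow (n := 2) (by simp) even_two two_ne_zero, Nat.cast_ofNat]
        congr 1
        exact integral_congr_ae (hprod.mono fun a ha => by simp only [ha])
    _ ≤ ‖f + g‖ * ‖f - g‖ := Lp.norm_smul_le _ _

lemma integral_sq_radialRetraction_sub_le {R : ℝ} (hR : 0 ≤ R) (f g : Lp ℝ 4 μ) :
    (∫ a, ((radialRetraction R f : Lp ℝ 4 μ) a ^ 2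
      - (radialRetraction R g : Lp ℝ 4 μ) a ^ 2) ^ 2 ∂μ) ^ (1 / 2 : ℝ)
      ≤ 2 * R * min (2 * R) (2 * ‖f - g‖) := by
  have hf := norm_radialRetraction_le hR f
  have hg := norm_radialRetraction_le hR g
  refine (integral_sq_sub_sq_le _ _).trans
    (mul_le_mul ?_ (le_min ?_ ?_) (norm_nonneg _) (by positivity))
  · linarith [norm_add_le (radialRetraction R f) (radialRetraction R g)]
  · linarith [norm_sub_le (radialRetraction R f) (radialRetraction R g)]
  · exact norm_radialRetraction_sub_le hR f g

lemma integral_sq_radialRetraction_sub_le_rpow {R : ℝ} (hR : 0 ≤ R) (f g : Lp ℝ 4 μ)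
    {D : ℝ} (hD : ‖f - g‖ ^ 2 ≤ D) :
    (∫ a, ((radialRetraction R f : Lp ℝ 4 μ) a ^ 2
      - (radialRetraction R g : Lp ℝ 4 μ) a ^ 2) ^ 2 ∂μ) ^ (1 / 2 : ℝ)
      ≤ 2 * R * (8 * R * D) ^ (1 / 3 : ℝ) := by
  calc _ ≤ 2 * R * min (2 * R) (2 * ‖f - g‖) := integral_sq_radialRetraction_sub_le hR f g
    _ ≤ 2 * R * (2 * R * (2 * ‖f - g‖) ^ 2) ^ (1 / 3 : ℝ) := by
        gcongr
        exact min_le_mul_sq_rpow_third (by positivity) (by positivity)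
    _ ≤ 2 * R * (8 * R * D) ^ (1 / 3 : ℝ) := by
        gcongr 2 * R * ?_ ^ (1 / 3 : ℝ)
        nlinarith

end MeasureTheory.Lp

lemma MeasureTheory.MemLp.norm_toLp_eq_integral_pow {α : Type*} [MeasurableSpace α]
    {μ : Measure α} {p : ℝ≥0∞} {n : ℕ} (hpn : p = n) (hn : Even n) (hn0 : n ≠ 0) {f : α → ℝ}
    (hf : MemLp f p μ) :
    ‖hf.toLp f‖ = (∫ a, f a ^ n ∂μ) ^ (1 / n : ℝ) := by
  rw [Lp.norm_eq_integral_pow hpn hn hn0]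
  exact congrArg (· ^ _) (integral_congr_ae (hf.coeFn_toLp.mono fun a ha => by simp only [ha]))

lemma integral_abs_mul_abs_le {α : Type*} [MeasurableSpace α] {μ : Measure α} {f g : α → ℝ}
    (hf : MemLp f 2 μ) (hg : MemLp g 2 μ) :
    ∫ a, |f a| * |g a| ∂μ ≤
      (∫ a, f a ^ 2 ∂μ) ^ (1 / 2 : ℝ) * (∫ a, g a ^ 2 ∂μ) ^ (1 / 2 : ℝ) := by
  have h := integral_mul_norm_le_Lp_mul_Lq (μ := μ) Real.HolderConjugate.two_two
    (by simpa using hf) (by simpa using hg)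
  simpa only [Real.norm_eq_abs, Real.rpow_two, sq_abs] using h

lemma memLp_restrict_Ioc_of_continuousOn {f : ℝ → ℝ} {a b : ℝ}
    (hf : ContinuousOn f (Icc a b)) (p : ℝ≥0∞) : MemLp f p (volume.restrict (Ioc a b)) := by
  obtain ⟨C, hC⟩ := isCompact_Icc.exists_bound_of_continuousOn hf
  refine MemLp.of_bound ((hf.mono Ioc_subset_Icc_self).aestronglyMeasurable measurableSet_Ioc) C ?_
  exact (ae_restrict_iff' measurableSet_Ioc).2
    (.of_forall fun t ht => hC t (Ioc_subset_Icc_self ht))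

lemma sq_le_two_mul_integral_sq_mul_integral_deriv_sq {z z' : ℝ → ℝ} {a b ξ : ℝ}
    (hz : ∀ t ∈ Icc a b, HasDerivAt z (z' t) t) (hz' : ContinuousOn z' (Icc a b)) (ha : z a = 0)
    (hξ : ξ ∈ Icc a b) :
    z ξ ^ 2 ≤
      2 * (∫ t in a..b, z t ^ 2) ^ (1 / 2 : ℝ) * (∫ t in a..b, z' t ^ 2) ^ (1 / 2 : ℝ) := by
  have hzc : ContinuousOn z (Icc a b) := HasDerivAt.continuousOn hz
  have hsub : Icc a ξ ⊆ Icc a b := Icc_subset_Icc le_rfl hξ.2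
  have hderiv : ContinuousOn (fun t => 2 * z t * z' t) (Icc a b) :=
    (continuousOn_const.mul hzc).mul hz'
  have habs : ContinuousOn (fun t => 2 * (|z t| * |z' t|)) (Icc a b) :=
    continuousOn_const.mul (hzc.abs.mul hz'.abs)
  have hftc : z ξ ^ 2 = ∫ t in a..ξ, 2 * z t * z' t := by
    rw [integral_eq_sub_of_hasDerivAt (f := fun t => z t ^ 2) (fun t ht => ?_)
      ((hderiv.mono hsub).intervalIntegrable_of_Icc hξ.1), ha]
    · ring
    · rw [uIcc_of_le hξ.1] at ht
      simpa using (hz t (hsub ht)).fun_pow 2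
  calc z ξ ^ 2 ≤ ∫ t in a..ξ, 2 * (|z t| * |z' t|) := by
        rw [hftc]
        refine integral_mono_on hξ.1 ((hderiv.mono hsub).intervalIntegrable_of_Icc hξ.1)
          ((habs.mono hsub).intervalIntegrable_of_Icc hξ.1) fun t _ => ?_
        rw [mul_assoc, ← abs_mul]
        exact mul_le_mul_of_nonneg_left (le_abs_self _) zero_le_two
    _ ≤ ∫ t in a..b, 2 * (|z t| * |z' t|) :=
        integral_mono_interval le_rfl hξ.1 hξ.2 (.of_forall fun t => by positivity)
          (habs.intervalIntegrable_of_Icc (hξ.1.trans hξ.2))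
    _ ≤ 2 * (∫ t in a..b, z t ^ 2) ^ (1 / 2 : ℝ) * (∫ t in a..b, z' t ^ 2) ^ (1 / 2 : ℝ) := by
        rw [intervalIntegral.integral_const_mul, mul_assoc]
        simp only [integral_of_le (hξ.1.trans hξ.2)]
        exact mul_le_mul_of_nonneg_left (integral_abs_mul_abs_le
          (memLp_restrict_Ioc_of_continuousOn hzc 2) (memLp_restrict_Ioc_of_continuousOn hz' 2))
          zero_le_two

lemma norm_toLp_sq_le_two_mul_integral_sq_mul_integral_deriv_sq {p : ℝ≥0∞}
    {z z' : ℝ → ℝ}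
    (hz : ∀ t ∈ Icc 0 1, HasDerivAt z (z' t) t) (hz' : ContinuousOn z' (Icc 0 1)) (h0 : z 0 = 0)
    (hzL : MemLp z p (volume.restrict (Ioc 0 1))) :
    ‖hzL.toLp z‖ ^ 2 ≤
      2 * (∫ t in (0:ℝ)..1, z t ^ 2) ^ (1 / 2 : ℝ) *
        (∫ t in (0:ℝ)..1, z' t ^ 2) ^ (1 / 2 : ℝ) := by
  set S := 2 * (∫ t in (0:ℝ)..1, z t ^ 2) ^ (1 / 2 : ℝ) *
    (∫ t in (0:ℝ)..1, z' t ^ 2) ^ (1 / 2 : ℝ)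
  have hsup (ξ : ℝ) (hξ : ξ ∈ Icc (0 : ℝ) 1) : z ξ ^ 2 ≤ S :=
    sq_le_two_mul_integral_sq_mul_integral_deriv_sq hz hz' h0 hξ
  have hbound : ∀ᵐ a ∂(volume.restrict (Ioc (0:ℝ) 1)), ‖(hzL.toLp z) a‖ ≤ √S := by
    filter_upwards [hzL.coeFn_toLp, ae_restrict_mem measurableSet_Ioc] with a ha hmem
    rw [ha, Real.norm_eq_abs]
    exact Real.abs_le_sqrt (hsup a (Ioc_subset_Icc_self hmem))
  have hnorm : ‖hzL.toLp z‖ ≤ √S := by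
    simpa [measureUnivNNReal] using Lp.norm_le_of_ae_bound (Real.sqrt_nonneg S) hbound
  calc ‖hzL.toLp z‖ ^ 2 ≤ √S ^ 2 :=
        pow_le_pow_left₀ (by rw [Lp.norm_def]; exact ENNReal.toReal_nonneg) hnorm 2
    _ = S := Real.sq_sqrt ((sq_nonneg _).trans (hsup 0 ⟨le_rfl, zero_le_one⟩))

/-- For the truncated Burgers nonlinearity `F_R` (`F_R(x) = x²` if `|x|_{L⁴} ≤ R`,
`F_R(x) = R² x²/|x|²_{L⁴}` otherwise) there are `α, β > 0` with `2α/(1−β) ∈ [1,2)` and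
`c_R > 0` such that `|F_R(x) − F_R(y)|_{L²} ≤ c_R |x−y|_{L²}^α ‖x−y‖^β` for all `C¹`
functions `x, y` on `[0,1]` vanishing at the endpoints. -/
theorem stmt11 (R : ℝ) (hR : 0 < R)
    (nL4 : (ℝ → ℝ) → ℝ)
    (hnL4 : ∀ x : ℝ → ℝ, nL4 x = (∫ ξ in (0:ℝ)..1, x ξ ^ 4) ^ ((1:ℝ)/4))
    (FR : (ℝ → ℝ) → ℝ → ℝ)
    (hFR : ∀ (x : ℝ → ℝ) (ξ : ℝ), FR x ξ =
      if nL4 x ≤ R then x ξ ^ 2 else R ^ 2 * x ξ ^ 2 / nL4 x ^ 2) :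
    ∃ α : ℝ, 0 < α ∧ ∃ β : ℝ, 0 < β ∧ 2 * α / (1 - β) ∈ Set.Ico (1:ℝ) 2 ∧
      ∃ c : ℝ, 0 < c ∧ ∀ x y x' y' : ℝ → ℝ,
        (∀ ξ ∈ Set.Icc (0:ℝ) 1, HasDerivAt x (x' ξ) ξ) →
        (∀ ξ ∈ Set.Icc (0:ℝ) 1, HasDerivAt y (y' ξ) ξ) →
        ContinuousOn x' (Set.Icc (0:ℝ) 1) → ContinuousOn y' (Set.Icc (0:ℝ) 1) →
        x 0 = 0 → x 1 = 0 → y 0 = 0 → y 1 = 0 →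
        (∫ ξ in (0:ℝ)..1, (FR x ξ - FR y ξ) ^ 2) ^ ((1:ℝ)/2) ≤
          c * ((∫ ξ in (0:ℝ)..1, (x ξ - y ξ) ^ 2) ^ ((1:ℝ)/2)) ^ α *
            (∫ ξ in (0:ℝ)..1, (x' ξ - y' ξ) ^ 2) ^ (β / 2) := by
  refine ⟨1 / 3, by norm_num, 1 / 3, by norm_num, by norm_num,
    2 * R * (16 * R) ^ (1 / 3 : ℝ), by positivity, ?_⟩
  intro x y x' y' hx hy hx' hy' hx0 _ hy0 _
  set μ := volume.restrict (Ioc (0 : ℝ) 1)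
  have hFR_ae (f : ℝ → ℝ) (hf : MemLp f 4 μ) :
      FR f =ᵐ[μ] fun a => (radialRetraction R (hf.toLp f) : Lp ℝ 4 μ) a ^ 2 := by
    have hn : nL4 f = ‖hf.toLp f‖ := by
      rw [hnL4, hf.norm_toLp_eq_integral_pow (n := 4) (by simp) (by decide) (by norm_num),
        integral_of_le zero_le_one, Nat.cast_ofNat]
    filter_upwards [Lp.coeFn_radialRetraction R (hf.toLp f), hf.coeFn_toLp] with a hr hfa
    rw [hr, hfa, ← hn, hFR, radialScale]
    split_ifs <;> ring
  have hxL := memLp_restrict_Ioc_of_continuousOn (HasDerivAt.continuousOn hx) 4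
  have hyL := memLp_restrict_Ioc_of_continuousOn (HasDerivAt.continuousOn hy) 4
  set A := (∫ ξ in (0:ℝ)..1, (x ξ - y ξ) ^ 2) ^ (1 / 2 : ℝ)
  set I' := ∫ ξ in (0:ℝ)..1, (x' ξ - y' ξ) ^ 2
  have hA : 0 ≤ A := Real.rpow_nonneg (integral_nonneg zero_le_one fun _ _ => sq_nonneg _) _
  have hI' : 0 ≤ I' := integral_nonneg zero_le_one fun _ _ => sq_nonneg _
  have hXY : ‖hxL.toLp x - hyL.toLp y‖ ^ 2 ≤ 2 * A * I' ^ (1 / 2 : ℝ) := by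
    rw [← hxL.toLp_sub hyL]
    exact norm_toLp_sq_le_two_mul_integral_sq_mul_integral_deriv_sq (z' := x' - y')
      (fun t ht => (hx t ht).sub (hy t ht)) (hx'.sub hy') (by simp [hx0, hy0]) _
  have hF : ∫ ξ in (0:ℝ)..1, (FR x ξ - FR y ξ) ^ 2 = ∫ a,
      ((radialRetraction R (hxL.toLp x) : Lp ℝ 4 μ) a ^ 2
        - (radialRetraction R (hyL.toLp y) : Lp ℝ 4 μ) a ^ 2) ^ 2 ∂μ := by
    rw [integral_of_le zero_le_one]
    exact integral_congr_ae (by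
      filter_upwards [hFR_ae x hxL, hFR_ae y hyL] with a hxa hya
      rw [hxa, hya])
  calc (∫ ξ in (0:ℝ)..1, (FR x ξ - FR y ξ) ^ 2) ^ (1 / 2 : ℝ)
      ≤ 2 * R * (8 * R * (2 * A * I' ^ (1 / 2 : ℝ))) ^ (1 / 3 : ℝ) :=
        hF ▸ Lp.integral_sq_radialRetraction_sub_le_rpow hR.le _ _ hXY
    _ = 2 * R * (16 * R) ^ (1 / 3 : ℝ) * A ^ (1 / 3 : ℝ) * I' ^ (1 / 3 / 2 : ℝ) := by
        rw [show 8 * R * (2 * A * I' ^ (1 / 2 : ℝ)) = 16 * R * A * I' ^ (1 / 2 : ℝ) by ring,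
          Real.mul_rpow (by positivity) (by positivity), Real.mul_rpow (by positivity) hA,
          ← Real.rpow_mul hI', show (1 / 2 : ℝ) * (1 / 3) = 1 / 3 / 2 by norm_num]
        ring
end

section
/- Fix R > 0 and define, for a continuously differentiable function x : [0,1] → ℝ, the function F_R(x) = m_R(x)·x² where m_R(x) = 1 if ‖x‖_{L⁴} ≤ R and m_R(x) = R²/‖x‖²_{L⁴} if ‖x‖_{L⁴} ≥ R. Then there exists a constant c_R > 0 such that for all twice continuously differentiable functions x, y : [0,1] → ℝ with x(0) = x(1) = y(0) = y(1) = 0 one has ∫₀¹ (x''(ξ) − y''(ξ))·(x(ξ) − y(ξ)) dξ + ∫₀¹ (d/dξ)(F_R(x)(ξ) − F_R(y)(ξ))·(x(ξ) − y(ξ)) dξ ≤ −(π²/4)·∫₀¹ (x(ξ) − y(ξ))² dξ + c_R·(∫₀¹ (x(ξ) − y(ξ))² dξ)^{1/2}. -/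
/-!
Put `u = x - y`. Integrating by parts, the linear term equals `-‖u'‖₂²` and the nonlinear one
`-∫ u' (F_R x - F_R y)`. Since `m_R(x) = ψ(‖x‖₄)²` where `v ↦ ψ(‖v‖) v` is the radial retraction
onto the ball of radius `R`, which is `2`-Lipschitz in any normed space (here `L⁴`), we get
`F_R x - F_R y = (X - Y)(X + Y)` for `X = ψ(‖x‖₄) x`, `Y = ψ(‖y‖₄) y`, with
`‖X - Y‖₄ ≤ 2 min(‖u‖₄, R)` and `‖X + Y‖₄ ≤ 2R`, so Hölder bounds the nonlinear term by
`4R ‖u'‖₂ min(‖u‖₄, R)`. As `u` vanishes at both ends, `u(t)² ≤ 2t(1-t) ‖u'‖₂²`, whence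
`3‖u‖₂² ≤ ‖u'‖₂²` and `‖u‖₄⁴ ≤ ‖u'‖₂² ‖u‖₂²`. The estimate then follows by elementary
inequalities, separately for `‖u‖₂ ≤ 1` and `‖u‖₂ ≥ 1`.
-/

open MeasureTheory intervalIntegral Set Real

/-- `retractionFactor R ‖v‖ • v` is the radial retraction of `v` onto the closed ball of radius
`R`, and `m_R(x) = retractionFactor R ‖x‖_{L⁴} ^ 2`. -/
noncomputable def retractionFactor (R N : ℝ) : ℝ := if N ≤ R then 1 else R / N

section RadialRetraction

variable {R N : ℝ}

lemma retractionFactor_sq (R N : ℝ) :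
    retractionFactor R N ^ 2 = if N ≤ R then 1 else R ^ 2 / N ^ 2 := by
  unfold retractionFactor
  split_ifs <;> simp [div_pow]

lemma retractionFactor_nonneg (hR : 0 ≤ R) : 0 ≤ retractionFactor R N := by
  unfold retractionFactor
  split_ifs with h
  · exact zero_le_one
  · exact div_nonneg hR (hR.trans (not_le.1 h).le)

lemma retractionFactor_le_one (hR : 0 ≤ R) : retractionFactor R N ≤ 1 := by
  unfold retractionFactor
  split_ifs with h
  · exact le_rfl
  · exact div_le_one_of_le₀ (not_le.1 h).le (hR.trans (not_le.1 h).le)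

lemma retractionFactor_mul_le (hR : 0 ≤ R) : retractionFactor R N * N ≤ R := by
  unfold retractionFactor
  split_ifs with h
  · rwa [one_mul]
  · rw [div_mul_cancel₀ R (hR.trans_lt (not_le.1 h)).ne']

lemma abs_retractionFactor_sub_mul_le {a b : ℝ} (hR : 0 ≤ R) (hb : 0 ≤ b) (hba : b ≤ a) :
    |retractionFactor R a - retractionFactor R b| * b ≤ a - b := by
  unfold retractionFactor
  by_cases ha : a ≤ R
  · simpa [ha, hba.trans ha] using hba
  have ha0 : 0 < a := hR.trans_lt (not_le.1 ha)
  by_cases hbR : b ≤ R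
  · rw [if_neg ha, if_pos hbR, abs_sub_comm,
      abs_of_nonneg (sub_nonneg.2 (div_le_one_of_le₀ (not_le.1 ha).le ha0.le)),
      one_sub_div ha0.ne', div_mul_eq_mul_div, div_le_iff₀ ha0]
    nlinarith
  · have hb0 : 0 < b := hR.trans_lt (not_le.1 hbR)
    rw [if_neg ha, if_neg hbR, abs_sub_comm,
      abs_of_nonneg (sub_nonneg.2 (div_le_div_of_nonneg_left hR hb0 hba)),
      div_sub_div _ _ hb0.ne' ha0.ne', div_mul_eq_mul_div, div_le_iff₀ (by positivity)]
    nlinarith [mul_nonneg (mul_nonneg (sub_nonneg.2 hba) hb) (sub_nonneg.2 (not_le.1 ha).le)]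

variable {E : Type*} [SeminormedAddCommGroup E] [NormedSpace ℝ E]

lemma norm_retractionFactor_smul_le (hR : 0 ≤ R) (v : E) : ‖retractionFactor R ‖v‖ • v‖ ≤ R := by
  rw [norm_smul, Real.norm_of_nonneg (retractionFactor_nonneg hR)]
  exact retractionFactor_mul_le hR

lemma norm_retractionFactor_smul_sub_le (hR : 0 ≤ R) (v w : E) :
    ‖retractionFactor R ‖v‖ • v - retractionFactor R ‖w‖ • w‖ ≤ 2 * ‖v - w‖ := by
  wlog h : ‖w‖ ≤ ‖v‖ generalizing v w
  · rw [norm_sub_rev, norm_sub_rev v]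
    exact this w v (le_of_not_ge h)
  set c := retractionFactor R ‖v‖
  set d := retractionFactor R ‖w‖
  calc ‖c • v - d • w‖ = ‖c • (v - w) + (c - d) • w‖ := by rw [smul_sub, sub_smul]; abel_nf
    _ ≤ c * ‖v - w‖ + |c - d| * ‖w‖ := by
      refine (norm_add_le _ _).trans_eq ?_
      rw [norm_smul, norm_smul, Real.norm_of_nonneg (retractionFactor_nonneg hR), Real.norm_eq_abs]
    _ ≤ ‖v - w‖ + (‖v‖ - ‖w‖) :=
      add_le_add (mul_le_of_le_one_left (norm_nonneg _) (retractionFactor_le_one hR))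
        (abs_retractionFactor_sub_mul_le hR (norm_nonneg w) h)
    _ ≤ 2 * ‖v - w‖ := by linarith [norm_sub_norm_le v w]

end RadialRetraction

section IntervalIntegral

variable {a b : ℝ} {f g u u' v v' : ℝ → ℝ}

lemma continuousOn_of_forall_hasDerivAt {s : Set ℝ} (hu : ∀ t ∈ s, HasDerivAt u (u' t) t) :
    ContinuousOn u s :=
  continuousOn_of_forall_continuousAt fun t ht => (hu t ht).continuousAt

lemma ContinuousOn.memLp_restrict_Ioc (hf : ContinuousOn f (Icc a b)) (p : ENNReal) :
    MemLp f p (volume.restrict (Ioc a b)) := by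
  have : IsFiniteMeasure (volume.restrict (Ioc a b)) := ⟨by simp⟩
  obtain ⟨C, hC⟩ := isCompact_Icc.exists_bound_of_continuousOn hf
  refine MemLp.of_bound ((hf.mono Ioc_subset_Icc_self).aestronglyMeasurable measurableSet_Ioc) C ?_
  exact (ae_restrict_iff' measurableSet_Ioc).2
    (ae_of_all _ fun t ht => hC t (Ioc_subset_Icc_self ht))

lemma integral_abs_mul_le_sqrt_mul_sqrt (hab : a ≤ b) (hf : ContinuousOn f (Icc a b))
    (hg : ContinuousOn g (Icc a b)) :
    ∫ t in a..b, |f t * g t| ≤ √(∫ t in a..b, f t ^ 2) * √(∫ t in a..b, g t ^ 2) := by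
  have := integral_mul_norm_le_Lp_mul_Lq Real.HolderConjugate.two_two
    (hf.memLp_restrict_Ioc _) (hg.memLp_restrict_Ioc _)
  simp only [Real.norm_eq_abs, ← abs_mul, Real.rpow_two, sq_abs, ← Real.sqrt_eq_rpow] at this
  simpa only [integral_of_le hab] using this

lemma sq_integral_mul_le (hab : a ≤ b) (hf : ContinuousOn f (Icc a b))
    (hg : ContinuousOn g (Icc a b)) :
    (∫ t in a..b, f t * g t) ^ 2 ≤ (∫ t in a..b, f t ^ 2) * ∫ t in a..b, g t ^ 2 := by
  calc (∫ t in a..b, f t * g t) ^ 2 = |∫ t in a..b, f t * g t| ^ 2 := (sq_abs _).symm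
    _ ≤ (√(∫ t in a..b, f t ^ 2) * √(∫ t in a..b, g t ^ 2)) ^ 2 :=
      pow_le_pow_left₀ (abs_nonneg _) ((abs_integral_le_integral_abs hab).trans
        (integral_abs_mul_le_sqrt_mul_sqrt hab hf hg)) 2
    _ = (∫ t in a..b, f t ^ 2) * ∫ t in a..b, g t ^ 2 := by
      rw [mul_pow, sq_sqrt (integral_nonneg hab fun t _ => sq_nonneg _),
        sq_sqrt (integral_nonneg hab fun t _ => sq_nonneg _)]

lemma sq_sub_le_mul_integral_deriv_sq (hab : a ≤ b) (hu : ∀ t ∈ Icc a b, HasDerivAt u (u' t) t)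
    (hu' : ContinuousOn u' (Icc a b)) :
    (u b - u a) ^ 2 ≤ (b - a) * ∫ t in a..b, u' t ^ 2 := by
  have hftc : ∫ t in a..b, u' t = u b - u a :=
    integral_eq_sub_of_hasDerivAt (fun t ht => hu t (uIcc_of_le hab ▸ ht))
      (hu'.intervalIntegrable_of_Icc hab)
  simpa [hftc] using sq_integral_mul_le hab (continuousOn_const (c := (1:ℝ))) hu'

lemma integral_deriv_mul_eq_neg_integral_deriv_mul (hab : a ≤ b)
    (hu : ∀ t ∈ Icc a b, HasDerivAt u (u' t) t) (hu' : ContinuousOn u' (Icc a b))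
    (hv : ∀ t ∈ Icc a b, HasDerivAt v (v' t) t) (hv' : ContinuousOn v' (Icc a b))
    (ha : u a = 0) (hb : u b = 0) :
    ∫ t in a..b, v' t * u t = -∫ t in a..b, u' t * v t := by
  have := integral_mul_deriv_eq_deriv_mul (fun t ht => hu t (uIcc_of_le hab ▸ ht))
    (fun t ht => hv t (uIcc_of_le hab ▸ ht)) (hu'.intervalIntegrable_of_Icc hab)
    (hv'.intervalIntegrable_of_Icc hab)
  simp only [ha, hb, zero_mul, sub_zero, zero_sub] at this
  simpa only [mul_comm] using this

end IntervalIntegral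

section Poincare

variable {u u' : ℝ → ℝ}

lemma sq_le_two_mul_mul_integral_deriv_sq (hu : ∀ t ∈ Icc (0:ℝ) 1, HasDerivAt u (u' t) t)
    (hu' : ContinuousOn u' (Icc 0 1)) (h0 : u 0 = 0) (h1 : u 1 = 0) {t : ℝ}
    (ht : t ∈ Icc (0:ℝ) 1) :
    u t ^ 2 ≤ 2 * t * (1 - t) * ∫ s in (0:ℝ)..1, u' s ^ 2 := by
  have hsub : ∀ {c d : ℝ}, 0 ≤ c → c ≤ d → d ≤ 1 →
      ∫ s in c..d, u' s ^ 2 ≤ ∫ s in (0:ℝ)..1, u' s ^ 2 := fun hc hcd hd =>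
    integral_mono_interval hc hcd hd (ae_of_all _ fun s => sq_nonneg (u' s))
      ((hu'.pow 2).intervalIntegrable_of_Icc zero_le_one)
  have hl := sq_sub_le_mul_integral_deriv_sq ht.1 (fun s hs => hu s ⟨hs.1, hs.2.trans ht.2⟩)
    (hu'.mono (Icc_subset_Icc le_rfl ht.2))
  have hr := sq_sub_le_mul_integral_deriv_sq ht.2 (fun s hs => hu s ⟨ht.1.trans hs.1, hs.2⟩)
    (hu'.mono (Icc_subset_Icc ht.1 le_rfl))
  rw [h0, sub_zero, sub_zero] at hl
  rw [h1, zero_sub, neg_sq] at hr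
  have hl' : u t ^ 2 ≤ t * ∫ s in (0:ℝ)..1, u' s ^ 2 :=
    hl.trans (mul_le_mul_of_nonneg_left (hsub le_rfl ht.1 ht.2) ht.1)
  have hr' : u t ^ 2 ≤ (1 - t) * ∫ s in (0:ℝ)..1, u' s ^ 2 :=
    hr.trans (mul_le_mul_of_nonneg_left (hsub ht.1 ht.2 le_rfl) (sub_nonneg.2 ht.2))
  -- write `u t ^ 2 = (1 - t) * u t ^ 2 + t * u t ^ 2` and bound each term through one endpoint
  nlinarith [mul_le_mul_of_nonneg_left hl' (sub_nonneg.2 ht.2), mul_le_mul_of_nonneg_left hr' ht.1]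

lemma three_mul_integral_sq_le_integral_deriv_sq
    (hu : ∀ t ∈ Icc (0:ℝ) 1, HasDerivAt u (u' t) t) (hu' : ContinuousOn u' (Icc 0 1))
    (h0 : u 0 = 0) (h1 : u 1 = 0) :
    3 * ∫ t in (0:ℝ)..1, u t ^ 2 ≤ ∫ t in (0:ℝ)..1, u' t ^ 2 := by
  set S := ∫ t in (0:ℝ)..1, u' t ^ 2
  have hcu : ContinuousOn u (Icc 0 1) := continuousOn_of_forall_hasDerivAt hu
  have hmono : ∫ t in (0:ℝ)..1, u t ^ 2 ≤ ∫ t in (0:ℝ)..1, 2 * t * (1 - t) * S :=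
    integral_mono_on zero_le_one ((hcu.pow 2).intervalIntegrable_of_Icc zero_le_one)
      ((by fun_prop : Continuous _).intervalIntegrable _ _) fun t ht =>
        sq_le_two_mul_mul_integral_deriv_sq hu hu' h0 h1 ht
  have hval : ∫ t in (0:ℝ)..1, 2 * t * (1 - t) * S = S / 3 := by
    have hpoly : ∀ t : ℝ, 2 * t * (1 - t) * S = 2 * S * t - 2 * S * t ^ 2 := fun t => by ring
    simp only [hpoly]
    rw [intervalIntegral.integral_sub ((by fun_prop : Continuous _).intervalIntegrable _ _)
      ((by fun_prop : Continuous _).intervalIntegrable _ _), intervalIntegral.integral_const_mul,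
      intervalIntegral.integral_const_mul,
      integral_id, integral_pow]
    ring
  linarith

lemma integral_pow_four_le_integral_deriv_sq_mul_integral_sq
    (hu : ∀ t ∈ Icc (0:ℝ) 1, HasDerivAt u (u' t) t)
    (hu' : ContinuousOn u' (Icc 0 1)) (h0 : u 0 = 0) (h1 : u 1 = 0) :
    ∫ t in (0:ℝ)..1, u t ^ 4 ≤ (∫ t in (0:ℝ)..1, u' t ^ 2) * ∫ t in (0:ℝ)..1, u t ^ 2 := by
  set S := ∫ t in (0:ℝ)..1, u' t ^ 2
  have hS : 0 ≤ S := integral_nonneg zero_le_one fun t _ => sq_nonneg _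
  have hcu : ContinuousOn u (Icc 0 1) := continuousOn_of_forall_hasDerivAt hu
  rw [← intervalIntegral.integral_const_mul]
  refine integral_mono_on zero_le_one ((hcu.pow 4).intervalIntegrable_of_Icc zero_le_one)
    ((continuousOn_const.mul (hcu.pow 2)).intervalIntegrable_of_Icc zero_le_one) fun t ht => ?_
  have hsup : u t ^ 2 ≤ S := (sq_le_two_mul_mul_integral_deriv_sq hu hu' h0 h1 ht).trans
    (mul_le_of_le_one_left hS (by nlinarith [ht.1, ht.2]))
  calc u t ^ 4 = u t ^ 2 * u t ^ 2 := by ring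
    _ ≤ S * u t ^ 2 := by gcongr

end Poincare

noncomputable def intervalL4Norm (a b : ℝ) (f : ℝ → ℝ) : ℝ := (∫ t in a..b, f t ^ 4) ^ ((1:ℝ) / 4)

section IntervalL4Norm

variable {a b R : ℝ} {f g h x y v : ℝ → ℝ}

lemma intervalL4Norm_nonneg (hab : a ≤ b) : 0 ≤ intervalL4Norm a b f :=
  Real.rpow_nonneg (integral_nonneg hab fun t _ => by positivity) _

lemma intervalL4Norm_pow_four (hab : a ≤ b) :
    intervalL4Norm a b f ^ 4 = ∫ t in a..b, f t ^ 4 := by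
  rw [intervalL4Norm, one_div, show (4:ℝ) = (4:ℕ) by norm_num,
    Real.rpow_inv_natCast_pow (integral_nonneg hab fun t _ => by positivity) (by norm_num)]

lemma intervalL4Norm_eq_norm_toLp (hab : a ≤ b) (hf : ContinuousOn f (Icc a b)) :
    intervalL4Norm a b f = ‖(hf.memLp_restrict_Ioc 4).toLp f‖ := by
  rw [Lp.norm_toLp, MemLp.eLpNorm_eq_integral_rpow_norm (by norm_num) (by norm_num)
    (hf.memLp_restrict_Ioc 4), ENNReal.toReal_ofReal (by positivity), intervalL4Norm,
    integral_of_le hab]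
  simp only [Real.norm_eq_abs, ENNReal.toReal_ofNat, Real.rpow_ofNat, inv_eq_one_div,
    (by decide : Even 4).pow_abs]

lemma intervalL4Norm_eq_sqrt_sqrt (hab : a ≤ b) :
    intervalL4Norm a b f = √(√(∫ t in a..b, f t ^ 4)) := by
  rw [intervalL4Norm, Real.sqrt_eq_rpow, Real.sqrt_eq_rpow, ← Real.rpow_mul
    (integral_nonneg hab fun t _ => by positivity)]
  norm_num

lemma integral_abs_mul_mul_le (hab : a ≤ b) (hf : ContinuousOn f (Icc a b))
    (hg : ContinuousOn g (Icc a b)) (hh : ContinuousOn h (Icc a b)) :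
    ∫ t in a..b, |f t * (g t * h t)| ≤
      √(∫ t in a..b, f t ^ 2) * (intervalL4Norm a b g * intervalL4Norm a b h) := by
  have hgh : ∫ t in a..b, (g t * h t) ^ 2 ≤
      √(∫ t in a..b, g t ^ 4) * √(∫ t in a..b, h t ^ 4) := by
    calc ∫ t in a..b, (g t * h t) ^ 2 = ∫ t in a..b, |g t ^ 2 * h t ^ 2| :=
          integral_congr fun t _ => by rw [abs_of_nonneg (by positivity)]; ring
      _ ≤ √(∫ t in a..b, (g t ^ 2) ^ 2) * √(∫ t in a..b, (h t ^ 2) ^ 2) :=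
          integral_abs_mul_le_sqrt_mul_sqrt hab (hg.pow 2) (hh.pow 2)
      _ = √(∫ t in a..b, g t ^ 4) * √(∫ t in a..b, h t ^ 4) := by simp only [← pow_mul]
  calc ∫ t in a..b, |f t * (g t * h t)|
      ≤ √(∫ t in a..b, f t ^ 2) * √(∫ t in a..b, (g t * h t) ^ 2) :=
        integral_abs_mul_le_sqrt_mul_sqrt hab hf (hg.mul hh)
    _ ≤ √(∫ t in a..b, f t ^ 2) * √(√(∫ t in a..b, g t ^ 4) * √(∫ t in a..b, h t ^ 4)) := by
        gcongr
    _ = √(∫ t in a..b, f t ^ 2) * (intervalL4Norm a b g * intervalL4Norm a b h) := by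
        rw [Real.sqrt_mul (Real.sqrt_nonneg _), intervalL4Norm_eq_sqrt_sqrt hab,
          intervalL4Norm_eq_sqrt_sqrt hab]

lemma intervalL4Norm_retraction_sub_le (hab : a ≤ b) (hR : 0 ≤ R) (hx : ContinuousOn x (Icc a b))
    (hy : ContinuousOn y (Icc a b)) :
    intervalL4Norm a b (fun t => retractionFactor R (intervalL4Norm a b x) * x t -
        retractionFactor R (intervalL4Norm a b y) * y t) ≤
      2 * min (intervalL4Norm a b (fun t => x t - y t)) R := by
  have : Fact ((1 : ENNReal) ≤ 4) := ⟨by norm_num⟩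
  set X := (hx.memLp_restrict_Ioc 4).toLp x
  set Y := (hy.memLp_restrict_Ioc 4).toLp y
  have hsub : intervalL4Norm a b (fun t => x t - y t) = ‖X - Y‖ := by
    rw [intervalL4Norm_eq_norm_toLp (f := fun t => x t - y t) hab (hx.sub hy), ← MemLp.toLp_sub]
    rfl
  have hXY : intervalL4Norm a b (fun t => retractionFactor R (intervalL4Norm a b x) * x t -
      retractionFactor R (intervalL4Norm a b y) * y t) =
      ‖retractionFactor R ‖X‖ • X - retractionFactor R ‖Y‖ • Y‖ := by
    rw [intervalL4Norm_eq_norm_toLp hab hx, intervalL4Norm_eq_norm_toLp hab hy,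
      intervalL4Norm_eq_norm_toLp (f := fun t => retractionFactor R ‖X‖ * x t -
        retractionFactor R ‖Y‖ * y t) hab
        ((continuousOn_const.mul hx).sub (continuousOn_const.mul hy)),
      ← MemLp.toLp_const_smul, ← MemLp.toLp_const_smul, ← MemLp.toLp_sub]
    rfl
  rw [hXY, hsub, mul_min_of_nonneg _ _ zero_le_two]
  exact le_min (norm_retractionFactor_smul_sub_le hR X Y) ((norm_sub_le _ _).trans (by
    linarith [norm_retractionFactor_smul_le hR X, norm_retractionFactor_smul_le hR Y]))

lemma intervalL4Norm_retraction_add_le (hab : a ≤ b) (hR : 0 ≤ R) (hx : ContinuousOn x (Icc a b))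
    (hy : ContinuousOn y (Icc a b)) :
    intervalL4Norm a b (fun t => retractionFactor R (intervalL4Norm a b x) * x t +
        retractionFactor R (intervalL4Norm a b y) * y t) ≤ 2 * R := by
  have : Fact ((1 : ENNReal) ≤ 4) := ⟨by norm_num⟩
  set X := (hx.memLp_restrict_Ioc 4).toLp x
  set Y := (hy.memLp_restrict_Ioc 4).toLp y
  have hXY : intervalL4Norm a b (fun t => retractionFactor R (intervalL4Norm a b x) * x t +
      retractionFactor R (intervalL4Norm a b y) * y t) =
      ‖retractionFactor R ‖X‖ • X + retractionFactor R ‖Y‖ • Y‖ := by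
    rw [intervalL4Norm_eq_norm_toLp hab hx, intervalL4Norm_eq_norm_toLp hab hy,
      intervalL4Norm_eq_norm_toLp (f := fun t => retractionFactor R ‖X‖ * x t +
        retractionFactor R ‖Y‖ * y t) hab
        ((continuousOn_const.mul hx).add (continuousOn_const.mul hy)),
      ← MemLp.toLp_const_smul, ← MemLp.toLp_const_smul, ← MemLp.toLp_add]
    rfl
  rw [hXY]
  linarith [norm_add_le (retractionFactor R ‖X‖ • X) (retractionFactor R ‖Y‖ • Y),
    norm_retractionFactor_smul_le hR X, norm_retractionFactor_smul_le hR Y]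

lemma neg_integral_mul_retraction_sq_sub_le (hab : a ≤ b) (hR : 0 ≤ R)
    (hv : ContinuousOn v (Icc a b)) (hx : ContinuousOn x (Icc a b))
    (hy : ContinuousOn y (Icc a b)) :
    -∫ t in a..b, v t * (retractionFactor R (intervalL4Norm a b x) ^ 2 * x t ^ 2 -
        retractionFactor R (intervalL4Norm a b y) ^ 2 * y t ^ 2) ≤
      4 * R * √(∫ t in a..b, v t ^ 2) * min (intervalL4Norm a b (fun t => x t - y t)) R := by
  set c := retractionFactor R (intervalL4Norm a b x)
  set d := retractionFactor R (intervalL4Norm a b y)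
  have hX : ContinuousOn (fun t => c * x t) (Icc a b) := continuousOn_const.mul hx
  have hY : ContinuousOn (fun t => d * y t) (Icc a b) := continuousOn_const.mul hy
  calc -∫ t in a..b, v t * (c ^ 2 * x t ^ 2 - d ^ 2 * y t ^ 2)
      ≤ ∫ t in a..b, |v t * ((c * x t - d * y t) * (c * x t + d * y t))| := by
        refine (neg_le_abs _).trans ((abs_integral_le_integral_abs hab).trans_eq ?_)
        exact integral_congr fun t _ => by congr 2; ring
    _ ≤ √(∫ t in a..b, v t ^ 2) * (intervalL4Norm a b (fun t => c * x t - d * y t) *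
          intervalL4Norm a b (fun t => c * x t + d * y t)) :=
        integral_abs_mul_mul_le hab hv (hX.sub hY) (hX.add hY)
    _ ≤ √(∫ t in a..b, v t ^ 2) *
          (2 * min (intervalL4Norm a b (fun t => x t - y t)) R * (2 * R)) := by
        refine mul_le_mul_of_nonneg_left (mul_le_mul
          (intervalL4Norm_retraction_sub_le hab hR hx hy)
          (intervalL4Norm_retraction_add_le hab hR hx hy) (intervalL4Norm_nonneg hab)
          (mul_nonneg zero_le_two (le_min (intervalL4Norm_nonneg hab) hR))) (Real.sqrt_nonneg _)
    _ = 4 * R * √(∫ t in a..b, v t ^ 2) * min (intervalL4Norm a b (fun t => x t - y t)) R := by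
        ring

end IntervalL4Norm

lemma integral_deriv_const_mul_sq_sub_mul_eq {a b c d : ℝ} {x y x' y' : ℝ → ℝ} (hab : a ≤ b)
    (hx : ∀ t ∈ Icc a b, HasDerivAt x (x' t) t) (hx' : ContinuousOn x' (Icc a b))
    (hy : ∀ t ∈ Icc a b, HasDerivAt y (y' t) t) (hy' : ContinuousOn y' (Icc a b))
    (ha : x a = y a) (hb : x b = y b) :
    ∫ t in a..b, (deriv (fun s => c * x s ^ 2) t - deriv (fun s => d * y s ^ 2) t) * (x t - y t) =
      -∫ t in a..b, (x' t - y' t) * (c * x t ^ 2 - d * y t ^ 2) := by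
  have hsq : ∀ {z z' : ℝ → ℝ} (e : ℝ), (∀ t ∈ Icc a b, HasDerivAt z (z' t) t) →
      ∀ t ∈ Icc a b, HasDerivAt (fun s => e * z s ^ 2) (e * (2 * z t * z' t)) t :=
    fun e hz t ht => (((hz t ht).pow 2).const_mul e).congr_deriv (by norm_num)
  have hcx := continuousOn_of_forall_hasDerivAt hx
  have hcy := continuousOn_of_forall_hasDerivAt hy
  rw [integral_congr (g := fun t => (c * (2 * x t * x' t) - d * (2 * y t * y' t)) * (x t - y t))
    fun t ht => by rw [uIcc_of_le hab] at ht; rw [(hsq c hx t ht).deriv, (hsq d hy t ht).deriv]]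
  exact integral_deriv_mul_eq_neg_integral_deriv_mul hab (fun t ht => (hx t ht).sub (hy t ht))
    (hx'.sub hy') (fun t ht => (hsq c hx t ht).sub (hsq d hy t ht)) (by fun_prop)
    (sub_eq_zero.2 ha) (sub_eq_zero.2 hb)

lemma neg_add_le_of_poincare {R S M W T : ℝ} (hR : 0 < R) (hS : 0 ≤ S) (hM : 0 ≤ M)
    (hP : 3 * M ≤ S) (hI : W ^ 4 ≤ S * M) (hT : T ≤ 4 * R * √S * min W R) :
    -S + T ≤ -(π ^ 2 / 4) * M + (64 * R ^ 4 + 2) * M ^ ((1:ℝ) / 2) := by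
  rw [← Real.sqrt_eq_rpow]
  obtain ⟨s, hs, rfl⟩ : ∃ s, 0 ≤ s ∧ S = s ^ 2 := ⟨√S, Real.sqrt_nonneg S, (Real.sq_sqrt hS).symm⟩
  obtain ⟨m, hm, rfl⟩ : ∃ m, 0 ≤ m ∧ M = m ^ 2 := ⟨√M, Real.sqrt_nonneg M, (Real.sq_sqrt hM).symm⟩
  rw [Real.sqrt_sq hs] at hT
  rw [Real.sqrt_sq hm]
  have hpi : π ^ 2 < 10 := by nlinarith [pi_lt_d2, pi_pos]
  -- for `m ≤ 1` interpolate through `W`; for `m ≥ 1` use `min W R ≤ R` and `π ^ 2 / 4 < 3`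
  rcases le_total m 1 with hm1 | hm1
  · have hW : W ^ 2 ≤ s * m :=
      (pow_le_pow_iff_left₀ (sq_nonneg W) (mul_nonneg hs hm) two_ne_zero).1 (by nlinarith)
    have hT' : T ≤ 4 * R * s * W := hT.trans (by gcongr; exact min_le_left W R)
    nlinarith [sq_nonneg (s - 4 * R * W), sq_nonneg (s - 16 * R ^ 2 * m),
      mul_le_mul_of_nonneg_left hW (by positivity : (0:ℝ) ≤ 8 * R ^ 2),
      mul_nonneg hm (sub_nonneg.2 hm1),
      mul_nonneg (pow_nonneg hR.le 4) (mul_nonneg hm (sub_nonneg.2 hm1)),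
      mul_le_mul_of_nonneg_right hpi.le (sq_nonneg m)]
  · have hT' : T ≤ 4 * R * s * R := hT.trans (by gcongr; exact min_le_right W R)
    nlinarith [sq_nonneg (s - 12 * R ^ 2), mul_le_mul_of_nonneg_right hpi.le (sq_nonneg m),
      mul_nonneg (pow_nonneg hR.le 4) (sub_nonneg.2 hm1)]

/-- One-sided dissipativity of the cut-off Burgers drift: with `F_R(x) = m_R(x)·x²`,
`m_R(x) = 1` if `|x|_{L⁴} ≤ R` and `m_R(x) = R²/|x|²_{L⁴}` otherwise, there is `c_R > 0`
such that for all `C²` functions `x, y` on `[0,1]` vanishing at the endpoints,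
`∫₀¹ (x''−y'')(x−y) + ∫₀¹ ((F_R x)' − (F_R y)')(x−y)
  ≤ −(π²/4) ∫₀¹ (x−y)² + c_R (∫₀¹ (x−y)²)^{1/2}`. -/
theorem stmt12 (R : ℝ) (hR : 0 < R)
    (nL4 : (ℝ → ℝ) → ℝ)
    (hnL4 : ∀ x : ℝ → ℝ, nL4 x = (∫ ξ in (0:ℝ)..1, x ξ ^ 4) ^ ((1:ℝ)/4))
    (mR : (ℝ → ℝ) → ℝ)
    (hmR : ∀ x : ℝ → ℝ, mR x = if nL4 x ≤ R then 1 else R ^ 2 / nL4 x ^ 2) :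
    ∃ c : ℝ, 0 < c ∧ ∀ x y x' y' x'' y'' : ℝ → ℝ,
      (∀ ξ ∈ Set.Icc (0:ℝ) 1, HasDerivAt x (x' ξ) ξ) →
      (∀ ξ ∈ Set.Icc (0:ℝ) 1, HasDerivAt x' (x'' ξ) ξ) →
      (∀ ξ ∈ Set.Icc (0:ℝ) 1, HasDerivAt y (y' ξ) ξ) →
      (∀ ξ ∈ Set.Icc (0:ℝ) 1, HasDerivAt y' (y'' ξ) ξ) →
      ContinuousOn x'' (Set.Icc (0:ℝ) 1) → ContinuousOn y'' (Set.Icc (0:ℝ) 1) →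
      x 0 = 0 → x 1 = 0 → y 0 = 0 → y 1 = 0 →
      (∫ ξ in (0:ℝ)..1, (x'' ξ - y'' ξ) * (x ξ - y ξ)) +
        (∫ ξ in (0:ℝ)..1,
          (deriv (fun t => mR x * x t ^ 2) ξ - deriv (fun t => mR y * y t ^ 2) ξ) *
            (x ξ - y ξ)) ≤
      -(Real.pi ^ 2 / 4) * (∫ ξ in (0:ℝ)..1, (x ξ - y ξ) ^ 2) +
        c * (∫ ξ in (0:ℝ)..1, (x ξ - y ξ) ^ 2) ^ ((1:ℝ)/2) := by
  refine ⟨64 * R ^ 4 + 2, by positivity, ?_⟩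
  intro x y x' y' x'' y'' hx hx' hy hy' hx'' hy'' hx0 hx1 hy0 hy1
  have hm : ∀ z, mR z = retractionFactor R (intervalL4Norm 0 1 z) ^ 2 := fun z => by
    rw [hmR, retractionFactor_sq, hnL4]; rfl
  have hcx' := continuousOn_of_forall_hasDerivAt hx'
  have hcy' := continuousOn_of_forall_hasDerivAt hy'
  have hu : ∀ ξ ∈ Icc (0:ℝ) 1, HasDerivAt (fun t => x t - y t) (x' ξ - y' ξ) ξ :=
    fun ξ hξ => (hx ξ hξ).sub (hy ξ hξ)
  have hu' : ContinuousOn (fun t => x' t - y' t) (Icc 0 1) := hcx'.sub hcy'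
  have hu0 : x 0 - y 0 = 0 := by rw [hx0, hy0, sub_self]
  have hu1 : x 1 - y 1 = 0 := by rw [hx1, hy1, sub_self]
  have hv : ∀ ξ ∈ Icc (0:ℝ) 1, HasDerivAt (fun t => x' t - y' t) (x'' ξ - y'' ξ) ξ :=
    fun ξ hξ => (hx' ξ hξ).sub (hy' ξ hξ)
  rw [integral_deriv_mul_eq_neg_integral_deriv_mul zero_le_one hu hu' hv (hx''.sub hy'') hu0 hu1,
    integral_deriv_const_mul_sq_sub_mul_eq zero_le_one hx hcx' hy hcy'
      (hx0.trans hy0.symm) (hx1.trans hy1.symm), hm x, hm y]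
  simp only [← sq]
  exact neg_add_le_of_poincare hR (integral_nonneg zero_le_one fun _ _ => sq_nonneg _)
    (integral_nonneg zero_le_one fun _ _ => sq_nonneg _)
    (three_mul_integral_sq_le_integral_deriv_sq hu hu' hu0 hu1)
    ((intervalL4Norm_pow_four zero_le_one).trans_le
      (integral_pow_four_le_integral_deriv_sq_mul_integral_sq hu hu' hu0 hu1))
    (neg_integral_mul_retraction_sq_sub_le zero_le_one hR.le hu'
      (continuousOn_of_forall_hasDerivAt hx) (continuousOn_of_forall_hasDerivAt hy))
end

section
/- Let u : [0,∞) × [0,1] → ℝ be continuous, once continuously differentiable in t and twice continuously differentiable in ξ, satisfying the deterministic Burgers equation ∂_t u(t,ξ) = ∂_ξξ u(t,ξ) + ∂_ξ(u(t,ξ)²) for all t > 0, ξ ∈ (0,1), with Dirichlet boundary conditions u(t,0) = u(t,1) = 0 for all t ≥ 0. Then for every t ≥ 0, ∫₀¹ u(t,ξ)⁴ dξ ≤ exp(−π² t/4)·∫₀¹ u(0,ξ)⁴ dξ. -/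
open MeasureTheory intervalIntegral

open Set Filter Topology

/-! Along the flow, `E(t) = ∫₀¹ u⁴` has `E' = ∫ 4u³ (u_ξξ + (u²)_ξ)`. The transport part
`8 u⁴ u_ξ = (8/5) (u⁵)_ξ` integrates to zero, and integrating the diffusion part by parts gives
`E' = -3 ∫ ((u²)_ξ)²`. As `u²` vanishes at the boundary, the Poincaré inequality
`∫₀¹ w² ≤ ∫₀¹ (w')²` yields `E' ≤ -3 E ≤ -(π²/4) E`, and Grönwall's inequality concludes. -/

theorem sq_integral_le_mul_integral_sq {f : ℝ → ℝ} {a b : ℝ} (hab : a ≤ b)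
    (hf : ContinuousOn f (Icc a b)) :
    (∫ x in a..b, f x) ^ 2 ≤ (b - a) * ∫ x in a..b, f x ^ 2 := by
  rcases hab.eq_or_lt with rfl | hlt
  · simp
  have hfi : IntervalIntegrable f volume a b := hf.intervalIntegrable_of_Icc hab
  have hf2 : IntervalIntegrable (fun x => f x ^ 2) volume a b :=
    (hf.pow 2).intervalIntegrable_of_Icc hab
  set c := ∫ x in a..b, f x
  have hvar : 0 ≤ ∫ x in a..b, ((b - a) * f x - c) ^ 2 :=
    integral_nonneg hab fun x _ => sq_nonneg _
  have hexpand : ∫ x in a..b, ((b - a) * f x - c) ^ 2 =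
      (b - a) * ((b - a) * ∫ x in a..b, f x ^ 2) - (b - a) * c ^ 2 := by
    have : (fun x => ((b - a) * f x - c) ^ 2) =
        fun x => ((b - a) ^ 2 * f x ^ 2 - 2 * (b - a) * c * f x) + c ^ 2 := by
      funext x; ring
    rw [this, integral_add ((hf2.const_mul _).sub (hfi.const_mul _)) intervalIntegrable_const,
      integral_sub (hf2.const_mul _) (hfi.const_mul _), intervalIntegral.integral_const_mul,
      intervalIntegral.integral_const_mul, intervalIntegral.integral_const, smul_eq_mul]
    ring
  rw [hexpand] at hvar
  nlinarith

theorem integral_sq_le_mul_integral_deriv_sq {v v' : ℝ → ℝ} {a b : ℝ} (hab : a ≤ b)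
    (hv : ∀ x ∈ Icc a b, HasDerivAt v (v' x) x) (hv' : ContinuousOn v' (Icc a b))
    (ha : v a = 0) :
    ∫ x in a..b, v x ^ 2 ≤ (b - a) ^ 2 * ∫ x in a..b, v' x ^ 2 := by
  set C := (b - a) * ∫ x in a..b, v' x ^ 2
  have hpointwise : ∀ x ∈ Icc a b, v x ^ 2 ≤ C := by
    intro x hx
    have hsub : Icc a x ⊆ Icc a b := Icc_subset_Icc le_rfl hx.2
    have hftc : v x = ∫ y in a..x, v' y := by
      rw [integral_eq_sub_of_hasDerivAt (fun y hy => hv y (hsub (uIcc_of_le hx.1 ▸ hy)))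
        ((hv'.mono hsub).intervalIntegrable_of_Icc hx.1), ha, sub_zero]
    have habs : |v x| ≤ ∫ y in a..b, |v' y| := by
      rw [hftc]
      refine (abs_integral_le_integral_abs hx.1).trans ?_
      exact integral_mono_interval le_rfl hx.1 hx.2 (ae_of_all _ fun y => abs_nonneg _)
        (hv'.abs.intervalIntegrable_of_Icc hab)
    calc v x ^ 2 = |v x| ^ 2 := (sq_abs _).symm
      _ ≤ (∫ y in a..b, |v' y|) ^ 2 := pow_le_pow_left₀ (abs_nonneg _) habs 2
      _ ≤ (b - a) * ∫ y in a..b, |v' y| ^ 2 := sq_integral_le_mul_integral_sq hab hv'.abs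
      _ = C := by simp only [sq_abs, C]
  have hv_cont : ContinuousOn v (Icc a b) := fun x hx =>
    (hv x hx).continuousAt.continuousWithinAt
  calc ∫ x in a..b, v x ^ 2 ≤ ∫ _ in a..b, C :=
        integral_mono_on hab ((hv_cont.pow 2).intervalIntegrable_of_Icc hab)
          intervalIntegrable_const hpointwise
    _ = (b - a) ^ 2 * ∫ x in a..b, v' x ^ 2 := by
        simp only [intervalIntegral.integral_const, smul_eq_mul, C]
        ring

theorem integral_pow_three_mul_burgers_eq {v v' v'' : ℝ → ℝ} {a b : ℝ} (hab : a ≤ b)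
    (hv : ∀ x ∈ Icc a b, HasDerivAt v (v' x) x) (hv' : ∀ x ∈ Icc a b, HasDerivAt v' (v'' x) x)
    (hv'' : ContinuousOn v'' (Icc a b)) (ha : v a = 0) (hb : v b = 0) :
    ∫ x in a..b, 4 * v x ^ 3 * (v'' x + 2 * v x * v' x) =
      -3 * ∫ x in a..b, (2 * v x * v' x) ^ 2 := by
  have hvc : ContinuousOn v (Icc a b) := fun x hx => (hv x hx).continuousAt.continuousWithinAt
  have hv'c : ContinuousOn v' (Icc a b) := fun x hx => (hv' x hx).continuousAt.continuousWithinAt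
  have hint₁ : IntervalIntegrable (fun x => 4 * v x ^ 3 * (v'' x + 2 * v x * v' x)) volume a b :=
    ((continuousOn_const.mul (hvc.pow 3)).mul
      (hv''.add ((continuousOn_const.mul hvc).mul hv'c))).intervalIntegrable_of_Icc hab
  have hint₂ : IntervalIntegrable (fun x => (2 * v x * v' x) ^ 2) volume a b :=
    (((continuousOn_const.mul hvc).mul hv'c).pow 2).intervalIntegrable_of_Icc hab
  -- `4 v³ v' + (8/5) v⁵` is a primitive of the integrand plus `3 (2 v v')²`.
  have hprim : ∀ x ∈ uIcc a b, HasDerivAt (fun y => 4 * v y ^ 3 * v' y + 8 / 5 * v y ^ 5)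
      (4 * v x ^ 3 * (v'' x + 2 * v x * v' x) + 3 * (2 * v x * v' x) ^ 2) x := by
    intro x hx
    rw [uIcc_of_le hab] at hx
    have hvx := hv x hx
    refine ((((hvx.fun_pow 3).const_mul 4).fun_mul (hv' x hx)).fun_add
      ((hvx.fun_pow 5).const_mul (8 / 5))).congr_deriv ?_
    push_cast
    ring
  have hzero := integral_eq_sub_of_hasDerivAt hprim (hint₁.add (hint₂.const_mul 3))
  rw [integral_add hint₁ (hint₂.const_mul 3), intervalIntegral.integral_const_mul, ha, hb]
    at hzero
  linarith

theorem integral_pow_three_mul_burgers_le {v v' v'' : ℝ → ℝ} {a b : ℝ} (hab : a ≤ b)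
    (hv : ∀ x ∈ Icc a b, HasDerivAt v (v' x) x) (hv'c : ContinuousOn v' (Icc a b))
    (hv' : ∀ x ∈ Icc a b, HasDerivAt v' (v'' x) x) (hv'' : ContinuousOn v'' (Icc a b))
    (ha : v a = 0) (hb : v b = 0) :
    (b - a) ^ 2 * ∫ x in a..b, 4 * v x ^ 3 * (v'' x + 2 * v x * v' x) ≤
      -3 * ∫ x in a..b, v x ^ 4 := by
  have hvc : ContinuousOn v (Icc a b) := fun x hx => (hv x hx).continuousAt.continuousWithinAt
  have hpoincare := integral_sq_le_mul_integral_deriv_sq hab (v := fun x => v x ^ 2)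
    (v' := fun x => 2 * v x * v' x)
    (fun x hx => by simpa using (hv x hx).fun_pow 2)
    ((continuousOn_const.mul hvc).mul hv'c) (by simp [ha])
  simp only [← pow_mul, Nat.reduceMul] at hpoincare
  rw [integral_pow_three_mul_burgers_eq hab hv hv' hv'' ha hb]
  nlinarith [sq_nonneg (b - a)]

section ParametricIntegral

variable {E : Type*} [NormedAddCommGroup E] [NormedSpace ℝ E]

theorem continuousOn_intervalIntegral_of_continuousOn_prod {X : Type*} [TopologicalSpace X]
    {F : X → ℝ → E} {S : Set X} {a b : ℝ} (hab : a ≤ b)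
    (hF : ContinuousOn F.uncurry (S ×ˢ Icc a b)) :
    ContinuousOn (fun t => ∫ x in a..b, F t x) S := by
  rw [continuousOn_iff_continuous_domRestrict]
  -- Precomposing with the projection onto `[a, b]` gives a globally continuous integrand.
  let G : S → ℝ → E := fun t x => F t (projIcc a b hab x)
  have hG : Continuous G.uncurry :=
    hF.comp_continuous (f := fun p : S × ℝ => ((p.1 : X), (projIcc a b hab p.2 : ℝ)))
      (by fun_prop) fun p => ⟨p.1.2, (projIcc a b hab p.2).2⟩
  refine (continuous_parametric_intervalIntegral_of_continuous' (μ := volume) hG a b).congr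
    fun t => integral_congr fun x hx => ?_
  simp only [G, projIcc_of_mem hab (uIcc_of_le hab ▸ hx)]

theorem hasDerivAt_intervalIntegral_of_continuousOn {F F' : ℝ → ℝ → E} {T : Set ℝ}
    {a b t₀ : ℝ} (hab : a ≤ b) (hT : T ∈ 𝓝 t₀) (hTc : IsCompact T)
    (hF : ContinuousOn F.uncurry (T ×ˢ Icc a b)) (hF' : ContinuousOn F'.uncurry (T ×ˢ Icc a b))
    (hderiv : ∀ t ∈ T, ∀ x ∈ Icc a b, HasDerivAt (F · x) (F' t x) t) :
    HasDerivAt (fun t => ∫ x in a..b, F t x) (∫ x in a..b, F' t₀ x) t₀ := by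
  obtain ⟨C, hC⟩ := (hTc.prod isCompact_Icc).exists_bound_of_continuousOn hF'
  have hIoc : uIoc a b ⊆ Icc a b := uIoc_of_le hab ▸ Ioc_subset_Icc_self
  have hmeas : ∀ {G : ℝ → ℝ → E}, ContinuousOn G.uncurry (T ×ˢ Icc a b) → ∀ t ∈ T,
      AEStronglyMeasurable (G t) (volume.restrict (uIoc a b)) := fun hG t ht =>
    ((hG.uncurry_left t ht).mono hIoc).aestronglyMeasurable measurableSet_uIoc
  have ht₀ : t₀ ∈ T := mem_of_mem_nhds hT
  refine (hasDerivAt_integral_of_dominated_loc_of_deriv_le (bound := fun _ => C) hT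
    (eventually_of_mem hT (hmeas hF)) ((hF.uncurry_left t₀ ht₀).intervalIntegrable_of_Icc hab)
    (hmeas hF' t₀ ht₀) ?_ intervalIntegrable_const ?_).2
  · exact ae_of_all _ fun x hx t ht => hC (t, x) ⟨ht, hIoc hx⟩
  · exact ae_of_all _ fun x hx t ht => hderiv t ht x (hIoc hx)

end ParametricIntegral

theorem le_exp_neg_mul_of_hasDerivAt_le {f f' : ℝ → ℝ} {K a t : ℝ}
    (hf : ContinuousOn f (Ici a)) (hf' : ∀ s > a, HasDerivAt f (f' s) s)
    (hle : ∀ s > a, f' s ≤ -K * f s) (ht : a ≤ t) :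
    f t ≤ Real.exp (-K * (t - a)) * f a := by
  have hanti : AntitoneOn (fun s => Real.exp (K * s) * f s) (Ici a) := by
    refine antitoneOn_of_hasDerivWithinAt_nonpos (convex_Ici a)
      (((Real.continuous_exp.comp (continuous_const_mul K)).continuousOn).mul hf)
      (f' := fun s => Real.exp (K * s) * (K * f s + f' s)) (fun s hs => ?_) (fun s hs => ?_)
    · rw [interior_Ici] at hs
      refine ((((hasDerivAt_id s).const_mul K).exp.fun_mul (hf' s hs)).congr_deriv ?_)
        |>.hasDerivWithinAt
      simp only [id]
      ring
    · rw [interior_Ici] at hs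
      exact mul_nonpos_of_nonneg_of_nonpos (Real.exp_pos _).le (by linarith [hle s hs])
  have hmono := hanti self_mem_Ici ht ht
  calc f t = Real.exp (-K * t) * (Real.exp (K * t) * f t) := by
        rw [← mul_assoc, ← Real.exp_add]; simp
    _ ≤ Real.exp (-K * t) * (Real.exp (K * a) * f a) :=
        mul_le_mul_of_nonneg_left hmono (Real.exp_pos _).le
    _ = Real.exp (-K * (t - a)) * f a := by rw [← mul_assoc, ← Real.exp_add]; ring_nf

/-- Decay of the `L⁴` norm for the deterministic Burgers equation
`∂_t u = ∂_ξξ u + ∂_ξ(u²)` on `(0,1)` with Dirichlet boundary conditions: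
`∫₀¹ u(t,ξ)⁴ dξ ≤ e^{−π² t/4} ∫₀¹ u(0,ξ)⁴ dξ` for all `t ≥ 0`. -/
theorem stmt15 (u ut uξ uξξ : ℝ → ℝ → ℝ)
    (hu_cont : ContinuousOn (fun p : ℝ × ℝ => u p.1 p.2)
      (Set.Ici (0:ℝ) ×ˢ Set.Icc (0:ℝ) 1))
    (hut : ∀ t ∈ Set.Ici (0:ℝ), ∀ ξ ∈ Set.Icc (0:ℝ) 1,
      HasDerivAt (fun s => u s ξ) (ut t ξ) t)
    (huξ : ∀ t ∈ Set.Ici (0:ℝ), ∀ ξ ∈ Set.Icc (0:ℝ) 1,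
      HasDerivAt (fun η => u t η) (uξ t ξ) ξ)
    (huξξ : ∀ t ∈ Set.Ici (0:ℝ), ∀ ξ ∈ Set.Icc (0:ℝ) 1,
      HasDerivAt (fun η => uξ t η) (uξξ t ξ) ξ)
    (hut_cont : ContinuousOn (fun p : ℝ × ℝ => ut p.1 p.2)
      (Set.Ici (0:ℝ) ×ˢ Set.Icc (0:ℝ) 1))
    (huξ_cont : ContinuousOn (fun p : ℝ × ℝ => uξ p.1 p.2)
      (Set.Ici (0:ℝ) ×ˢ Set.Icc (0:ℝ) 1))
    (huξξ_cont : ContinuousOn (fun p : ℝ × ℝ => uξξ p.1 p.2)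
      (Set.Ici (0:ℝ) ×ˢ Set.Icc (0:ℝ) 1))
    (hpde : ∀ t : ℝ, 0 < t → ∀ ξ ∈ Set.Ioo (0:ℝ) 1,
      ut t ξ = uξξ t ξ + deriv (fun η => u t η ^ 2) ξ)
    (hbc : ∀ t : ℝ, 0 ≤ t → u t 0 = 0 ∧ u t 1 = 0) :
    ∀ t : ℝ, 0 ≤ t →
      (∫ ξ in (0:ℝ)..1, u t ξ ^ 4) ≤
        Real.exp (-(Real.pi ^ 2) * t / 4) * ∫ ξ in (0:ℝ)..1, u 0 ξ ^ 4 := by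
  intro t ht
  have hu4 : ContinuousOn (Function.uncurry fun r ξ => u r ξ ^ 4) (Ici 0 ×ˢ Icc (0:ℝ) 1) :=
    hu_cont.pow 4
  have henergy' : ∀ s > 0, HasDerivAt (fun r => ∫ ξ in (0:ℝ)..1, u r ξ ^ 4)
      (∫ ξ in (0:ℝ)..1, 4 * u s ξ ^ 3 * ut s ξ) s := by
    intro s hs
    have hbox : Icc (s / 2) (2 * s) ×ˢ Icc (0:ℝ) 1 ⊆ Ici 0 ×ˢ Icc 0 1 :=
      prod_mono (fun r hr => (by linarith [hr.1] : (0:ℝ) ≤ r)) subset_rfl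
    refine hasDerivAt_intervalIntegral_of_continuousOn (F' := fun r ξ => 4 * u r ξ ^ 3 * ut r ξ)
      zero_le_one (Icc_mem_nhds (by linarith) (by linarith)) isCompact_Icc (hu4.mono hbox)
      (((continuousOn_const.mul (hu_cont.pow 3)).mul hut_cont).mono hbox) fun r hr ξ hξ => ?_
    simpa using (hut r (show (0:ℝ) ≤ r by linarith [hr.1]) ξ hξ).fun_pow 4
  have hdecay : ∀ s > 0, ∫ ξ in (0:ℝ)..1, 4 * u s ξ ^ 3 * ut s ξ ≤
      -(Real.pi ^ 2 / 4) * ∫ ξ in (0:ℝ)..1, u s ξ ^ 4 := by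
    intro s hs
    have hpde' : ∫ ξ in (0:ℝ)..1, 4 * u s ξ ^ 3 * ut s ξ =
        ∫ ξ in (0:ℝ)..1, 4 * u s ξ ^ 3 * (uξξ s ξ + 2 * u s ξ * uξ s ξ) :=
      integral_congr_Ioo_of_le zero_le_one fun ξ hξ => by
        have hsq := (huξ s hs.le ξ (Ioo_subset_Icc_self hξ)).fun_pow 2
        rw [hpde s hs ξ hξ, hsq.deriv]
        ring
    have hdissipation := integral_pow_three_mul_burgers_le zero_le_one (huξ s hs.le)
      (huξ_cont.uncurry_left s hs.le) (huξξ s hs.le) (huξξ_cont.uncurry_left s hs.le)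
      (hbc s hs.le).1 (hbc s hs.le).2
    have hnonneg : 0 ≤ ∫ ξ in (0:ℝ)..1, u s ξ ^ 4 :=
      integral_nonneg zero_le_one fun ξ _ => by positivity
    have hpi : Real.pi ^ 2 / 4 ≤ 3 := by nlinarith [Real.pi_lt_d2, Real.pi_pos]
    rw [hpde']
    norm_num at hdissipation
    nlinarith [mul_le_mul_of_nonneg_right hpi hnonneg]
  simpa [neg_div, mul_div_right_comm] using le_exp_neg_mul_of_hasDerivAt_le
    (continuousOn_intervalIntegral_of_continuousOn_prod zero_le_one hu4) henergy' hdecay ht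
end
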